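/- arXiv:2404.13649 — 4 statements merged into one kernel-verified Lean document; each statement's English description precedes it below -/
import Mathlib

section
/- Let X be a random variable on ℝ^p with distribution P*, let e : ℝ^p → ℝ^k be measurable, and let P*_{e,x} denote the conditional distribution of X given e(X) = e(x). Then for any β ∈ (0,2], E_{X}[E_{Y ~ P*_{e,X}} ‖X − Y‖^β] = E_{X}[E_{Y,Y' iid ~ P*_{e,X}} ‖Y − Y'‖^β], i.e. the expected reconstruction error equals the expected pairwise distance between two independent draws from the oracle reconstructed distribution. -/
open MeasureTheory ProbabilityTheory
open scoped ENNReal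

section Aux

variable {p : ℕ}

lemma stmt0_rpow_add_le {a b β : ℝ} (ha : 0 ≤ a) (hb : 0 ≤ b) (hβ : 0 < β) :
    (a + b) ^ β ≤ 2 ^ β * (a ^ β + b ^ β) := by
  have h1 : a + b ≤ 2 * max a b := by
    rcases le_total a b with h | h
    · rw [max_eq_right h]; linarith
    · rw [max_eq_left h]; linarith
  have h2 : (a + b) ^ β ≤ (2 * max a b) ^ β :=
    Real.rpow_le_rpow (by positivity) h1 hβ.le
  have h3 : (2 * max a b) ^ β = 2 ^ β * (max a b) ^ β :=
    Real.mul_rpow (by norm_num) (le_max_of_le_left ha)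
  have h4 : (max a b) ^ β ≤ a ^ β + b ^ β := by
    rcases le_total a b with h | h
    · rw [max_eq_right h]
      have : 0 ≤ a ^ β := Real.rpow_nonneg ha β
      linarith
    · rw [max_eq_left h]
      have : 0 ≤ b ^ β := Real.rpow_nonneg hb β
      linarith
  calc (a + b) ^ β ≤ 2 ^ β * (max a b) ^ β := h3 ▸ h2
    _ ≤ 2 ^ β * (a ^ β + b ^ β) := by
        have h2β : (0:ℝ) ≤ 2 ^ β := Real.rpow_nonneg (by norm_num) β
        nlinarith

/-- Dichotomy: if the single-point "moment" is finite, the double integral is finite. -/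
lemma stmt0_dichotomy (μ : Measure (EuclideanSpace ℝ (Fin p))) [IsProbabilityMeasure μ]
    {β : ℝ} (hβ : 0 < β) (x : EuclideanSpace ℝ (Fin p))
    (hx : ∫⁻ y, ENNReal.ofReal (‖x - y‖ ^ β) ∂μ ≠ ⊤) :
    ∫⁻ x', ∫⁻ y, ENNReal.ofReal (‖x' - y‖ ^ β) ∂μ ∂μ ≠ ⊤ := by
  set C : ℝ≥0∞ := ENNReal.ofReal (2 ^ β) with hC
  set Lx : ℝ≥0∞ := ∫⁻ y, ENNReal.ofReal (‖x - y‖ ^ β) ∂μ with hLx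
  have hmx : Measurable fun y : EuclideanSpace ℝ (Fin p) => ENNReal.ofReal (‖x - y‖ ^ β) :=
    ((Real.continuous_rpow_const hβ.le).comp
      (continuous_const.sub continuous_id).norm).measurable.ennreal_ofReal
  have hpt : ∀ x' y : EuclideanSpace ℝ (Fin p),
      ENNReal.ofReal (‖x' - y‖ ^ β)
        ≤ C * (ENNReal.ofReal (‖x - x'‖ ^ β) + ENNReal.ofReal (‖x - y‖ ^ β)) := by
    intro x' y
    have h1 : ‖x' - y‖ ≤ ‖x - x'‖ + ‖x - y‖ := by
      have h : x' - y = -(x - x') + (x - y) := by abel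
      rw [h]
      exact (norm_add_le _ _).trans (by rw [norm_neg])
    have h2 : ‖x' - y‖ ^ β ≤ 2 ^ β * (‖x - x'‖ ^ β + ‖x - y‖ ^ β) :=
      (Real.rpow_le_rpow (norm_nonneg _) h1 hβ.le).trans
        (stmt0_rpow_add_le (norm_nonneg _) (norm_nonneg _) hβ)
    calc ENNReal.ofReal (‖x' - y‖ ^ β)
        ≤ ENNReal.ofReal (2 ^ β * (‖x - x'‖ ^ β + ‖x - y‖ ^ β)) := ENNReal.ofReal_le_ofReal h2
      _ = C * (ENNReal.ofReal (‖x - x'‖ ^ β) + ENNReal.ofReal (‖x - y‖ ^ β)) := by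
          rw [ENNReal.ofReal_mul (Real.rpow_nonneg (by norm_num) β),
            ENNReal.ofReal_add (Real.rpow_nonneg (norm_nonneg _) β)
              (Real.rpow_nonneg (norm_nonneg _) β)]
  have hbound : ∫⁻ x', ∫⁻ y, ENNReal.ofReal (‖x' - y‖ ^ β) ∂μ ∂μ
      ≤ ∫⁻ x', C * (ENNReal.ofReal (‖x - x'‖ ^ β) + Lx) ∂μ := by
    refine lintegral_mono fun x' => ?_
    calc ∫⁻ y, ENNReal.ofReal (‖x' - y‖ ^ β) ∂μ
        ≤ ∫⁻ y, C * (ENNReal.ofReal (‖x - x'‖ ^ β) + ENNReal.ofReal (‖x - y‖ ^ β)) ∂μ :=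
          lintegral_mono fun y => hpt x' y
      _ = C * (ENNReal.ofReal (‖x - x'‖ ^ β) + Lx) := by
          rw [lintegral_const_mul (f := fun y =>
            ENNReal.ofReal (‖x - x'‖ ^ β) + ENNReal.ofReal (‖x - y‖ ^ β)) _ (measurable_const.add hmx), lintegral_add_left
            measurable_const, lintegral_const, measure_univ, mul_one]
  have hrhs : ∫⁻ x', C * (ENNReal.ofReal (‖x - x'‖ ^ β) + Lx) ∂μ = C * (Lx + Lx) := by
    rw [lintegral_const_mul (f := fun x' =>
      ENNReal.ofReal (‖x - x'‖ ^ β) + Lx) _ (hmx.add measurable_const), lintegral_add_right _ measurable_const,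
      lintegral_const, measure_univ, mul_one]
  have hfin : C * (Lx + Lx) ≠ ⊤ :=
    ENNReal.mul_ne_top ENNReal.ofReal_ne_top (ENNReal.add_ne_top.2 ⟨hx, hx⟩)
  intro h
  rw [h] at hbound
  exact hfin (top_le_iff.mp (hbound.trans_eq hrhs))

end Aux

/-- For `X ~ P*` on `ℝ^p`, `e` measurable, and `P*_{e,x}` the regular
conditional distribution of `X` given `e(X) = e(x)` (formalized as `condDistrib id e P*`
evaluated at `e x`), for any `β ∈ (0,2]`,
`E_X E_{Y ~ P*_{e,X}} ‖X − Y‖^β = E_X E_{Y,Y' iid ~ P*_{e,X}} ‖Y − Y'‖^β`. -/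
theorem stmt0 {p k : ℕ} (P : Measure (EuclideanSpace ℝ (Fin p))) [IsProbabilityMeasure P]
    (e : EuclideanSpace ℝ (Fin p) → EuclideanSpace ℝ (Fin k)) (he : Measurable e)
    (β : ℝ) (hβ0 : 0 < β) (hβ2 : β ≤ 2) :
    ∫ x, ∫ y, ‖x - y‖ ^ β ∂(condDistrib id e P (e x)) ∂P
      = ∫ x, ∫ y, ∫ y', ‖y - y'‖ ^ β ∂(condDistrib id e P (e x))
          ∂(condDistrib id e P (e x)) ∂P := by
  haveI : BorelSpace ((EuclideanSpace ℝ (Fin k) × EuclideanSpace ℝ (Fin p))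
      × EuclideanSpace ℝ (Fin p)) := Prod.borelSpace
  set κ := condDistrib (id : EuclideanSpace ℝ (Fin p) → EuclideanSpace ℝ (Fin p)) e P with hκdef
  -- measurability facts
  have hmeas : Measurable fun r :
      ((EuclideanSpace ℝ (Fin k)) × (EuclideanSpace ℝ (Fin p))) × (EuclideanSpace ℝ (Fin p)) =>
      ENNReal.ofReal (‖r.1.2 - r.2‖ ^ β) :=
    ((Real.continuous_rpow_const hβ0.le).comp
      ((continuous_fst.snd).sub continuous_snd).norm).measurable.ennreal_ofReal
  set L : EuclideanSpace ℝ (Fin k) → EuclideanSpace ℝ (Fin p) → ℝ≥0∞ :=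
    fun z x => ∫⁻ y, ENNReal.ofReal (‖x - y‖ ^ β) ∂κ z with hLdef
  have hL : Measurable fun q : (EuclideanSpace ℝ (Fin k)) × (EuclideanSpace ℝ (Fin p)) =>
      L q.1 q.2 := by
    simp only [hLdef]
    have := Measurable.lintegral_kernel_prod_right'
      (κ := κ.comap Prod.fst measurable_fst) hmeas
    simpa [Kernel.comap_apply] using this
  have hLz : ∀ z, Measurable (L z) := by
    intro z
    exact Measurable.of_uncurry_left (f := L) (x := z) hL
  set Λ : EuclideanSpace ℝ (Fin k) → ℝ≥0∞ := fun z => ∫⁻ x, L z x ∂κ z with hΛdef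
  have hΛ : Measurable Λ := by
    rw [hΛdef]
    exact Measurable.lintegral_kernel_prod_right' (κ := κ) hL
  -- dichotomy
  have hdich : ∀ z, Λ z = ⊤ → ∀ x, L z x = ⊤ := by
    intro z hz x
    by_contra hx
    have hx' : ∫⁻ y, ENNReal.ofReal (‖x - y‖ ^ β) ∂κ z ≠ ⊤ := by
      simpa only [hLdef] using hx
    have hz' : ∫⁻ x', ∫⁻ y, ENNReal.ofReal (‖x' - y‖ ^ β) ∂κ z ∂κ z = ⊤ := by
      simpa only [hΛdef, hLdef] using hz
    exact stmt0_dichotomy (κ z) hβ0 x hx' hz'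
  -- inner integral rewriting
  have hinner : ∀ z x, ∫ y, ‖x - y‖ ^ β ∂κ z = (L z x).toReal := by
    intro z x
    have hsm : AEStronglyMeasurable (fun y : EuclideanSpace ℝ (Fin p) => ‖x - y‖ ^ β) (κ z) := by
      exact ((Real.continuous_rpow_const hβ0.le).comp
        (continuous_const.sub continuous_id).norm).aestronglyMeasurable
    rw [integral_eq_lintegral_of_nonneg_ae
      (Filter.Eventually.of_forall fun y => Real.rpow_nonneg (norm_nonneg _) β) hsm]
  have h2 : ∀ z, ∫ y, ∫ y', ‖y - y'‖ ^ β ∂κ z ∂κ z = (Λ z).toReal := by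
    intro z
    have h2a : ∀ y, ∫ y', ‖y - y'‖ ^ β ∂κ z = (L z y).toReal := fun y => hinner z y
    rw [integral_congr_ae (Filter.Eventually.of_forall h2a)]
    rw [integral_eq_lintegral_of_nonneg_ae
      (Filter.Eventually.of_forall fun y => ENNReal.toReal_nonneg)
      ((hLz z).ennreal_toReal.aestronglyMeasurable)]
    show (∫⁻ y, ENNReal.ofReal (L z y).toReal ∂κ z).toReal = (Λ z).toReal
    by_cases hz : Λ z = ⊤
    · have hall : ∀ y, L z y = ⊤ := hdich z hz
      simp [hall, hz]
    · have hz' : ∫⁻ y, L z y ∂κ z ≠ ⊤ := by simpa only [hΛdef] using hz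
      have hae : ∀ᵐ y ∂κ z, L z y < ⊤ := ae_lt_top (hLz z) hz'
      have : ∫⁻ y, ENNReal.ofReal (L z y).toReal ∂κ z = ∫⁻ y, L z y ∂κ z := by
        refine lintegral_congr_ae (hae.mono fun y hy => ?_)
        show ENNReal.ofReal (L z y).toReal = L z y
        rw [ENNReal.ofReal_toReal hy.ne]
      rw [this]
  have hA : ∫ x, ∫ y, ‖x - y‖ ^ β ∂κ (e x) ∂P = ∫ x, (L (e x) x).toReal ∂P :=
    integral_congr_ae (Filter.Eventually.of_forall fun x => hinner (e x) x)
  have hB : ∫ x, ∫ y, ∫ y', ‖y - y'‖ ^ β ∂κ (e x) ∂κ (e x) ∂P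
      = ∫ x, (Λ (e x)).toReal ∂P :=
    integral_congr_ae (Filter.Eventually.of_forall fun x => h2 (e x))
  rw [hA, hB]
  -- disintegration
  have hmap : (P.map e) ⊗ₘ κ = P.map (fun x => (e x, x)) := by
    have h1 : κ = (P.map fun a => (e a, a)).condKernel := by
      rw [hκdef, condDistrib]
      simp only [id_eq]
    have h2' := Measure.disintegrate (ρ := P.map fun a => (e a, a)) (ρCond := (P.map fun a => (e a, a)).condKernel)
    have h3 : (P.map fun a => (e a, a)).fst = P.map e :=
      Measure.fst_map_prodMk (Y := fun a => a) measurable_id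
    rw [h1, ← h3]
    exact h2'
  haveI hPe : IsProbabilityMeasure (P.map e) := Measure.isProbabilityMeasure_map he.aemeasurable
  have hφ : Measurable fun x : EuclideanSpace ℝ (Fin p) => (e x, x) :=
    he.prodMk measurable_id
  have hLHS : ∫ x, (L (e x) x).toReal ∂P
      = (∫⁻ z, ∫⁻ x, ENNReal.ofReal (L z x).toReal ∂κ z ∂(P.map e)).toReal := by
    calc ∫ x, (L (e x) x).toReal ∂P
        = ∫ q, (L q.1 q.2).toReal ∂(P.map fun x => (e x, x)) :=
          (integral_map hφ.aemeasurable hL.ennreal_toReal.aestronglyMeasurable).symm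
      _ = ∫ q, (L q.1 q.2).toReal ∂((P.map e) ⊗ₘ κ) := by rw [hmap]
      _ = (∫⁻ q, ENNReal.ofReal (L q.1 q.2).toReal ∂((P.map e) ⊗ₘ κ)).toReal := by
          rw [integral_eq_lintegral_of_nonneg_ae
            (Filter.Eventually.of_forall fun q => ENNReal.toReal_nonneg)
            hL.ennreal_toReal.aestronglyMeasurable]
      _ = (∫⁻ z, ∫⁻ x, ENNReal.ofReal (L z x).toReal ∂κ z ∂(P.map e)).toReal := by
          congr 1
          exact Measure.lintegral_compProd hL.ennreal_toReal.ennreal_ofReal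
  have hRHS : ∫ x, (Λ (e x)).toReal ∂P
      = (∫⁻ z, ENNReal.ofReal (Λ z).toReal ∂(P.map e)).toReal := by
    calc ∫ x, (Λ (e x)).toReal ∂P
        = ∫ z, (Λ z).toReal ∂(P.map e) :=
          (integral_map he.aemeasurable hΛ.ennreal_toReal.aestronglyMeasurable).symm
      _ = (∫⁻ z, ENNReal.ofReal (Λ z).toReal ∂(P.map e)).toReal := by
          rw [integral_eq_lintegral_of_nonneg_ae
            (Filter.Eventually.of_forall fun z => ENNReal.toReal_nonneg)
            hΛ.ennreal_toReal.aestronglyMeasurable]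
  rw [hLHS, hRHS]
  congr 1
  refine lintegral_congr fun z => ?_
  by_cases hz : Λ z = ⊤
  · have hall : ∀ x, L z x = ⊤ := hdich z hz
    simp [hall, hz]
  · have hz' : ∫⁻ x, L z x ∂κ z ≠ ⊤ := by simpa only [hΛdef] using hz
    have hae : ∀ᵐ x ∂κ z, L z x < ⊤ := ae_lt_top (hLz z) hz'
    calc ∫⁻ x, ENNReal.ofReal (L z x).toReal ∂κ z = ∫⁻ x, L z x ∂κ z := by
          refine lintegral_congr_ae (hae.mono fun x hx => ?_)
          show ENNReal.ofReal (L z x).toReal = L z x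
          rw [ENNReal.ofReal_toReal hx.ne]
      _ = ENNReal.ofReal (Λ z).toReal := by
          rw [ENNReal.ofReal_toReal hz]
end

section
/- Let Σ* be a symmetric positive semidefinite p×p matrix with eigendecomposition Σ* = QΛQ^⊤, Q orthogonal, Λ = diag(λ_1,…,λ_p), λ_1 ≥ … ≥ λ_p. Then over all M ∈ ℝ^{p×k} with M^⊤M = I_k, the quantity tr(Σ* − Σ*M(M^⊤Σ*M)^{-1}M^⊤Σ*) is minimized (equivalently tr((M^⊤Σ*M)^{-1}M^⊤(Σ*)²M) is maximized) exactly when the column span of M equals the span of the first k eigenvectors Q_{:k}, and the minimal value is λ_{k+1} + … + λ_p. -/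
open Matrix Finset

set_option maxHeartbeats 1000000

/-- The matrix consisting of the first `k` columns of `M` (padded by `0`, never used
when `k ≤ p`). -/
def firstCols {p : ℕ} (M : Matrix (Fin p) (Fin p) ℝ) (k : ℕ) : Matrix (Fin p) (Fin k) ℝ :=
  fun i j => if h : (j : ℕ) < p then M i ⟨j, h⟩ else 0

lemma mat_ext_mulVec {p q : ℕ} {A B : Matrix (Fin p) (Fin q) ℝ}
    (h : ∀ x, A *ᵥ x = B *ᵥ x) : A = B := by
  ext i j
  have := congrFun (h (Pi.single j 1)) i
  simpa [Matrix.mulVec_single_one] using this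

lemma fix_of_mem_range {p : ℕ} {P : Matrix (Fin p) (Fin p) ℝ} (hP2 : P * P = P)
    {y : Fin p → ℝ} (hy : y ∈ LinearMap.range P.mulVecLin) : P *ᵥ y = y := by
  obtain ⟨x, rfl⟩ := hy
  show P *ᵥ (P *ᵥ x) = P *ᵥ x
  rw [Matrix.mulVec_mulVec, hP2]

lemma proj_left_absorb {p : ℕ} {P P' : Matrix (Fin p) (Fin p) ℝ} (hP'2 : P' * P' = P')
    (h : LinearMap.range P.mulVecLin ≤ LinearMap.range P'.mulVecLin) : P' * P = P := by
  apply mat_ext_mulVec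
  intro x
  rw [← Matrix.mulVec_mulVec]
  exact fix_of_mem_range hP'2 (h ⟨x, rfl⟩)

lemma proj_unique {p : ℕ} {P P' : Matrix (Fin p) (Fin p) ℝ}
    (hP : Pᵀ = P) (hP2 : P * P = P) (hP' : P'ᵀ = P') (hP'2 : P' * P' = P')
    (h : LinearMap.range P.mulVecLin = LinearMap.range P'.mulVecLin) : P = P' := by
  have h1 : P' * P = P := proj_left_absorb hP'2 h.le
  have h2 : P * P' = P' := proj_left_absorb hP2 h.ge
  have h3 := congrArg Matrix.transpose h1
  rw [Matrix.transpose_mul, hP, hP'] at h3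
  rw [← h2, h3]

lemma posdef_conj {p k : ℕ} (S : Matrix (Fin p) (Fin p) ℝ) (hS : S.PosDef)
    (M : Matrix (Fin p) (Fin k) ℝ) (hM : ∀ x : Fin k → ℝ, x ≠ 0 → M *ᵥ x ≠ 0) :
    (Mᵀ * S * M).PosDef := by
  refine Matrix.posDef_iff_dotProduct_mulVec.mpr ⟨?_, ?_⟩
  · rw [← Matrix.conjTranspose_eq_transpose_of_trivial M]
    exact Matrix.isHermitian_conjTranspose_mul_mul M hS.isHermitian
  · intro x hx
    have key : star x ⬝ᵥ (Mᵀ * S * M) *ᵥ x = star (M *ᵥ x) ⬝ᵥ S *ᵥ (M *ᵥ x) := by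
      rw [← Matrix.mulVec_mulVec, ← Matrix.mulVec_mulVec, star_trivial, star_trivial,
        Matrix.dotProduct_mulVec x Mᵀ, Matrix.vecMul_transpose]
    rw [key]
    exact hS.dotProduct_mulVec_pos (hM x hx)

lemma range_mul_le {p q r : ℕ} (X : Matrix (Fin p) (Fin q) ℝ) (Y : Matrix (Fin q) (Fin r) ℝ) :
    LinearMap.range (X * Y).mulVecLin ≤ LinearMap.range X.mulVecLin := by
  rw [Matrix.mulVecLin_mul]; exact LinearMap.range_comp_le_range _ _

lemma range_mul_eq_map {p q r : ℕ} (X : Matrix (Fin p) (Fin q) ℝ) (Y : Matrix (Fin q) (Fin r) ℝ) :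
    LinearMap.range (X * Y).mulVecLin
      = Submodule.map X.mulVecLin (LinearMap.range Y.mulVecLin) := by
  rw [Matrix.mulVecLin_mul, LinearMap.range_comp]

lemma range_mul_right_unit {p q : ℕ} (X : Matrix (Fin p) (Fin q) ℝ)
    (U U' : Matrix (Fin q) (Fin q) ℝ) (h : U * U' = 1) :
    LinearMap.range (X * U).mulVecLin = LinearMap.range X.mulVecLin := by
  refine le_antisymm (range_mul_le _ _) ?_
  have hX : X = X * U * U' := by rw [Matrix.mul_assoc, h, Matrix.mul_one]
  conv_lhs => rw [hX]
  exact range_mul_le _ _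

lemma map_unit_inj {p : ℕ} (A A' : Matrix (Fin p) (Fin p) ℝ) (h : A' * A = 1)
    {U V : Submodule ℝ (Fin p → ℝ)}
    (hUV : U.map A.mulVecLin = V.map A.mulVecLin) : U = V := by
  have key : ∀ W : Submodule ℝ (Fin p → ℝ), (W.map A.mulVecLin).map A'.mulVecLin = W := by
    intro W
    rw [← Submodule.map_comp, ← Matrix.mulVecLin_mul, h, Matrix.mulVecLin_one, Submodule.map_id]
  rw [← key U, ← key V, hUV]

lemma diag_eq_sum_sq {p : ℕ} {R : Matrix (Fin p) (Fin p) ℝ} (hRt : Rᵀ = R) (hR2 : R * R = R)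
    (i : Fin p) : R i i = ∑ j, (R i j) ^ 2 := by
  conv_lhs => rw [← hR2]
  rw [Matrix.mul_apply]
  refine Finset.sum_congr rfl fun j _ => ?_
  have hj : R j i = R i j := by
    calc R j i = Rᵀ i j := (Matrix.transpose_apply R i j).symm
    _ = R i j := by rw [hRt]
  rw [hj]; ring

lemma diag_nonneg {p : ℕ} {R : Matrix (Fin p) (Fin p) ℝ} (hRt : Rᵀ = R) (hR2 : R * R = R)
    (i : Fin p) : 0 ≤ R i i := by
  rw [diag_eq_sum_sq hRt hR2 i]
  exact Finset.sum_nonneg fun j _ => sq_nonneg _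

lemma diag_le_one {p : ℕ} {R : Matrix (Fin p) (Fin p) ℝ} (hRt : Rᵀ = R) (hR2 : R * R = R)
    (i : Fin p) : R i i ≤ 1 := by
  have h := diag_eq_sum_sq hRt hR2 i
  have h2 : (R i i) ^ 2 ≤ ∑ j, (R i j) ^ 2 :=
    Finset.single_le_sum (f := fun j => (R i j) ^ 2) (fun j _ => sq_nonneg _)
      (Finset.mem_univ i)
  rw [← h] at h2
  nlinarith [diag_nonneg hRt hR2 i]

lemma row_eq_zero {p : ℕ} {R : Matrix (Fin p) (Fin p) ℝ} (hRt : Rᵀ = R) (hR2 : R * R = R)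
    {i : Fin p} (hi : R i i = 0) (j : Fin p) : R i j = 0 := by
  have h := diag_eq_sum_sq hRt hR2 i
  rw [hi] at h
  have := (Finset.sum_eq_zero_iff_of_nonneg (fun j _ => sq_nonneg (R i j))).mp h.symm j
    (Finset.mem_univ j)
  exact pow_eq_zero_iff (n := 2) (by norm_num) |>.mp this

lemma off_diag_zero {p : ℕ} {R : Matrix (Fin p) (Fin p) ℝ} (hRt : Rᵀ = R) (hR2 : R * R = R)
    {i : Fin p} (hi : R i i = 1) {j : Fin p} (hij : j ≠ i) : R i j = 0 := by
  have h := diag_eq_sum_sq hRt hR2 i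
  have hpair : (R i i) ^ 2 + (R i j) ^ 2 ≤ ∑ l, (R i l) ^ 2 := by
    rw [← Finset.sum_pair (f := fun l => (R i l) ^ 2) (Ne.symm hij)]
    exact Finset.sum_le_sum_of_subset_of_nonneg (Finset.subset_univ _)
      (fun l _ _ => sq_nonneg _)
  rw [← h, hi] at hpair
  nlinarith [sq_nonneg (R i j)]

/-- Let `Σ* = QΛQᵀ` be positive (semi)definite with `Q` orthogonal and
eigenvalues `λ_1 ≥ … ≥ λ_p`, with a gap `λ_k > λ_{k+1}`. Over all `M ∈ ℝ^{p×k}` with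
`MᵀM = I_k`, the quantity `tr(Σ* − Σ*M(MᵀΣ*M)⁻¹MᵀΣ*)` is at least `λ_{k+1} + … + λ_p`,
with equality exactly when the column span of `M` equals that of the first `k`
eigenvectors `Q_{:k}`; in particular the minimum is attained at `M = Q_{:k}`. -/
theorem stmt6 {p k : ℕ} (hk : k ≤ p) (S Q : Matrix (Fin p) (Fin p) ℝ)
    (lam : Fin p → ℝ) (hS : S.PosDef)
    (hQ : Qᵀ * Q = 1) (hdecomp : S = Q * Matrix.diagonal lam * Qᵀ)
    (hmono : ∀ i j : Fin p, i ≤ j → lam j ≤ lam i)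
    (hgap : ∀ i j : Fin p, (i : ℕ) < k → k ≤ (j : ℕ) → lam j < lam i) :
    (∀ M : Matrix (Fin p) (Fin k) ℝ, Mᵀ * M = 1 →
      ((∑ j ∈ univ.filter (fun j : Fin p => k ≤ (j : ℕ)), lam j)
          ≤ (S - S * M * (Mᵀ * S * M)⁻¹ * Mᵀ * S).trace ∧
        ((S - S * M * (Mᵀ * S * M)⁻¹ * Mᵀ * S).trace
            = ∑ j ∈ univ.filter (fun j : Fin p => k ≤ (j : ℕ)), lam j
          ↔ Submodule.span ℝ (Set.range Mᵀ)
              = Submodule.span ℝ (Set.range (firstCols Q k)ᵀ)))) ∧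
    (firstCols Q k)ᵀ * firstCols Q k = 1 ∧
    (S - S * firstCols Q k * ((firstCols Q k)ᵀ * S * firstCols Q k)⁻¹ * (firstCols Q k)ᵀ * S).trace
      = ∑ j ∈ univ.filter (fun j : Fin p => k ≤ (j : ℕ)), lam j := by
  classical
  have hQQt : Q * Qᵀ = 1 := mul_eq_one_comm.mp hQ
  have hQinj : ∀ x : Fin p → ℝ, x ≠ 0 → Q *ᵥ x ≠ 0 := by
    intro x hx hzero
    apply hx
    have h1 : Qᵀ *ᵥ (Q *ᵥ x) = x := by
      rw [Matrix.mulVec_mulVec, hQ, Matrix.one_mulVec]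
    rw [hzero, Matrix.mulVec_zero] at h1
    exact h1.symm
  have hLamconj : Qᵀ * S * Q = Matrix.diagonal lam := by
    rw [hdecomp]
    calc Qᵀ * (Q * Matrix.diagonal lam * Qᵀ) * Q
        = (Qᵀ * Q) * Matrix.diagonal lam * (Qᵀ * Q) := by simp only [Matrix.mul_assoc]
      _ = Matrix.diagonal lam := by rw [hQ, Matrix.one_mul, Matrix.mul_one]
  have hdiagPD : (Matrix.diagonal lam).PosDef := by
    have := posdef_conj S hS Q hQinj
    rwa [hLamconj] at this
  have hlam_pos : ∀ i, 0 < lam i := Matrix.posDef_diagonal_iff.mp hdiagPD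
  -- square root of the diagonal
  set dv : Fin p → ℝ := fun i => Real.sqrt (lam i) with hdv
  have hdv_pos : ∀ i, 0 < dv i := fun i => Real.sqrt_pos.mpr (hlam_pos i)
  have hdv_sq : ∀ i, dv i * dv i = lam i := fun i => Real.mul_self_sqrt (hlam_pos i).le
  set A := Q * Matrix.diagonal dv * Qᵀ with hAdef
  have hAt : Aᵀ = A := by
    rw [hAdef, Matrix.transpose_mul, Matrix.transpose_mul, Matrix.transpose_transpose,
      Matrix.diagonal_transpose]
    simp only [Matrix.mul_assoc]
  have hAA : A * A = S := by
    rw [hAdef, hdecomp]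
    calc (Q * Matrix.diagonal dv * Qᵀ) * (Q * Matrix.diagonal dv * Qᵀ)
        = Q * Matrix.diagonal dv * (Qᵀ * Q) * (Matrix.diagonal dv * Qᵀ) := by
          simp only [Matrix.mul_assoc]
      _ = Q * (Matrix.diagonal dv * Matrix.diagonal dv) * Qᵀ := by
          rw [hQ]; simp only [Matrix.mul_one, Matrix.mul_assoc]
      _ = Q * Matrix.diagonal lam * Qᵀ := by
          rw [Matrix.diagonal_mul_diagonal,
            show (fun i => dv i * dv i) = lam from funext fun i => hdv_sq i]
  set A' := Q * Matrix.diagonal (fun i => (dv i)⁻¹) * Qᵀ with hA'def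
  have hA'A : A' * A = 1 := by
    rw [hA'def, hAdef]
    calc Q * Matrix.diagonal (fun i => (dv i)⁻¹) * Qᵀ * (Q * Matrix.diagonal dv * Qᵀ)
        = Q * Matrix.diagonal (fun i => (dv i)⁻¹) * (Qᵀ * Q) * (Matrix.diagonal dv * Qᵀ) := by
          simp only [Matrix.mul_assoc]
      _ = Q * (Matrix.diagonal (fun i => (dv i)⁻¹) * Matrix.diagonal dv) * Qᵀ := by
          rw [hQ]; simp only [Matrix.mul_one, Matrix.mul_assoc]
      _ = Q * Qᵀ := by
          rw [Matrix.diagonal_mul_diagonal,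
            show (fun i => (dv i)⁻¹ * dv i) = fun _ => 1 from
              funext fun i => inv_mul_cancel₀ (hdv_pos i).ne',
            Matrix.diagonal_one, Matrix.mul_one]
      _ = 1 := hQQt
  -- the first-k-columns matrices
  have hcast : ∀ c : Fin k, (c : ℕ) < p := fun c => lt_of_lt_of_le c.isLt hk
  set Ek := firstCols (1 : Matrix (Fin p) (Fin p) ℝ) k with hEkdef
  set G := firstCols Q k with hGdef
  have hEapp : ∀ (i : Fin p) (c : Fin k), Ek i c = if (i : ℕ) = (c : ℕ) then 1 else 0 := by
    intro i c
    rw [hEkdef]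
    show (if h : (c : ℕ) < p then (1 : Matrix (Fin p) (Fin p) ℝ) i ⟨(c : ℕ), h⟩ else 0) = _
    rw [dif_pos (hcast c), Matrix.one_apply]
    simp [Fin.ext_iff]
  have hGapp : ∀ (i : Fin p) (c : Fin k), G i c = Q i ⟨(c : ℕ), hcast c⟩ := by
    intro i c
    rw [hGdef]
    show (if h : (c : ℕ) < p then Q i ⟨(c : ℕ), h⟩ else 0) = _
    rw [dif_pos (hcast c)]
  have hGE : G = Q * Ek := by
    ext i c
    rw [Matrix.mul_apply,
      Finset.sum_eq_single (⟨(c : ℕ), hcast c⟩ : Fin p)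
        (fun l _ hl => by rw [hEapp, if_neg (fun h => hl (Fin.ext h)), mul_zero])
        (fun h => absurd (Finset.mem_univ _) h)]
    rw [hEapp, if_pos rfl, mul_one, hGapp]
  have hEtE : Ekᵀ * Ek = 1 := by
    ext a b
    rw [Matrix.mul_apply]
    simp only [Matrix.transpose_apply]
    rw [Finset.sum_eq_single (⟨(a : ℕ), hcast a⟩ : Fin p)
      (fun l _ hl => by rw [hEapp, if_neg (fun h => hl (Fin.ext h)), zero_mul])
      (fun h => absurd (Finset.mem_univ _) h)]
    rw [hEapp, hEapp, if_pos rfl, one_mul, Matrix.one_apply]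
    simp [Fin.ext_iff, eq_comm]
  have hEEt : ∀ i j : Fin p, (Ek * Ekᵀ) i j = if i = j ∧ (i : ℕ) < k then 1 else 0 := by
    intro i j
    rw [Matrix.mul_apply]
    simp only [Matrix.transpose_apply]
    by_cases hik : (i : ℕ) < k
    · rw [Finset.sum_eq_single (⟨(i : ℕ), hik⟩ : Fin k)
        (fun c _ hc => by rw [hEapp, if_neg (fun h => hc (Fin.ext h.symm)), zero_mul])
        (fun h => absurd (Finset.mem_univ _) h)]
      rw [hEapp, hEapp, if_pos rfl, one_mul]
      by_cases hij : i = j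
      · subst hij; simp [hik]
      · rw [if_neg (fun h => hij (Fin.ext h.symm)), if_neg (fun h => hij h.1)]
    · rw [Finset.sum_eq_zero
        (fun c _ => by rw [hEapp, if_neg (fun h => hik (by rw [h]; exact c.isLt)), zero_mul])]
      rw [if_neg (fun h => hik h.2)]
  have hGtG : Gᵀ * G = 1 := by
    rw [hGE, Matrix.transpose_mul]
    calc Ekᵀ * Qᵀ * (Q * Ek) = Ekᵀ * (Qᵀ * Q) * Ek := by simp only [Matrix.mul_assoc]
      _ = 1 := by rw [hQ, Matrix.mul_one, hEtE]
  set Dk := Matrix.diagonal (fun c : Fin k => dv ⟨(c : ℕ), hcast c⟩) with hDkdef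
  set Dk' := Matrix.diagonal (fun c : Fin k => (dv ⟨(c : ℕ), hcast c⟩)⁻¹) with hDk'def
  have hDkDk' : Dk * Dk' = 1 := by
    rw [hDkdef, hDk'def, Matrix.diagonal_mul_diagonal,
      show (fun c : Fin k => dv ⟨(c : ℕ), hcast c⟩ * (dv ⟨(c : ℕ), hcast c⟩)⁻¹)
          = fun _ => 1 from
        funext fun c => mul_inv_cancel₀ (hdv_pos _).ne',
      Matrix.diagonal_one]
  have hdE : Matrix.diagonal dv * Ek = Ek * Dk := by
    ext i c
    rw [Matrix.diagonal_mul, Matrix.mul_diagonal, hEapp]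
    by_cases h : (i : ℕ) = (c : ℕ)
    · rw [if_pos h, mul_one, one_mul,
        show i = (⟨(c : ℕ), hcast c⟩ : Fin p) from Fin.ext h]
    · rw [if_neg h, mul_zero, zero_mul]
  have hAG : A * G = G * Dk := by
    rw [hGE, hAdef]
    calc Q * Matrix.diagonal dv * Qᵀ * (Q * Ek)
        = Q * Matrix.diagonal dv * (Qᵀ * Q) * Ek := by simp only [Matrix.mul_assoc]
      _ = Q * (Matrix.diagonal dv * Ek) := by
          rw [hQ]; simp only [Matrix.mul_one, Matrix.mul_assoc]
      _ = Q * (Ek * Dk) := by rw [hdE]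
      _ = Q * Ek * Dk := by simp only [Matrix.mul_assoc]
  have hrngG_fix : Submodule.map A.mulVecLin (LinearMap.range G.mulVecLin)
      = LinearMap.range G.mulVecLin := by
    rw [← range_mul_eq_map, hAG, range_mul_right_unit G Dk Dk' hDkDk']
  have hGGt_sym : (G * Gᵀ)ᵀ = G * Gᵀ := by
    rw [Matrix.transpose_mul, Matrix.transpose_transpose]
  have hGGt_idem : (G * Gᵀ) * (G * Gᵀ) = G * Gᵀ := by
    calc (G * Gᵀ) * (G * Gᵀ) = G * (Gᵀ * G) * Gᵀ := by simp only [Matrix.mul_assoc]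
      _ = G * Gᵀ := by rw [hGtG, Matrix.mul_one]
  have hrngGGt : LinearMap.range (G * Gᵀ).mulVecLin = LinearMap.range G.mulVecLin := by
    refine le_antisymm (range_mul_le _ _) ?_
    have hG1 : G = (G * Gᵀ) * G := by rw [Matrix.mul_assoc, hGtG, Matrix.mul_one]
    conv_lhs => rw [hG1]
    exact range_mul_le _ _
  -- filter sets
  set ltk := univ.filter (fun i : Fin p => (i : ℕ) < k) with hltk
  set gek := univ.filter (fun j : Fin p => k ≤ (j : ℕ)) with hgek
  have hsplit : ∀ f : Fin p → ℝ, ∑ i, f i = ∑ i ∈ ltk, f i + ∑ i ∈ gek, f i := by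
    intro f
    rw [hltk, hgek, ← Finset.sum_filter_add_sum_filter_not univ (fun i : Fin p => (i : ℕ) < k) f]
    congr 1
    congr 1
    ext i
    simp [not_lt]
  have hcard : ltk.card = k := by
    apply Finset.card_eq_of_bijective (fun i h => (⟨i, lt_of_lt_of_le h hk⟩ : Fin p))
    · intro a ha
      rw [hltk] at ha
      simp only [Finset.mem_filter, Finset.mem_univ, true_and] at ha
      exact ⟨(a : ℕ), ha, Fin.ext rfl⟩
    · intro i h
      rw [hltk]
      simp [h]
    · intro i j hi hj heq
      exact congrArg Fin.val heq
  -- the threshold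
  obtain ⟨c, hc1, hc2⟩ : ∃ c : ℝ, (∀ i ∈ ltk, c < lam i) ∧ (∀ j ∈ gek, lam j ≤ c) := by
    by_cases hkp : k < p
    · refine ⟨lam ⟨k, hkp⟩, ?_, ?_⟩
      · intro i hi
        rw [hltk] at hi; simp only [Finset.mem_filter, Finset.mem_univ, true_and] at hi
        exact hgap i ⟨k, hkp⟩ hi (le_refl k)
      · intro j hj
        rw [hgek] at hj; simp only [Finset.mem_filter, Finset.mem_univ, true_and] at hj
        exact hmono ⟨k, hkp⟩ j (by rw [Fin.le_def]; exact hj)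
    · refine ⟨0, fun i _ => hlam_pos i, fun j hj => ?_⟩
      rw [hgek] at hj; simp only [Finset.mem_filter, Finset.mem_univ, true_and] at hj
      exact absurd hj (by have := j.isLt; omega)
  have htrS : S.trace = ∑ i, lam i := by
    rw [hdecomp, Matrix.trace_mul_cycle, hQ, Matrix.one_mul, Matrix.trace_diagonal]
  -- the main per-M statement
  have key : ∀ M : Matrix (Fin p) (Fin k) ℝ, Mᵀ * M = 1 →
      ((∑ j ∈ gek, lam j) ≤ (S - S * M * (Mᵀ * S * M)⁻¹ * Mᵀ * S).trace ∧
        ((S - S * M * (Mᵀ * S * M)⁻¹ * Mᵀ * S).trace = ∑ j ∈ gek, lam j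
          ↔ Submodule.span ℝ (Set.range Mᵀ) = Submodule.span ℝ (Set.range Gᵀ))) := by
    intro M hM
    have hMinj : ∀ x : Fin k → ℝ, x ≠ 0 → M *ᵥ x ≠ 0 := by
      intro x hx hzero
      apply hx
      have h1 : Mᵀ *ᵥ (M *ᵥ x) = x := by
        rw [Matrix.mulVec_mulVec, hM, Matrix.one_mulVec]
      rw [hzero, Matrix.mulVec_zero] at h1
      exact h1.symm
    set B := Mᵀ * S * M with hBdef
    have hBpd : B.PosDef := by rw [hBdef]; exact posdef_conj S hS M hMinj
    have hBdet : IsUnit B.det := isUnit_iff_ne_zero.mpr (ne_of_gt hBpd.det_pos)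
    have hBiB : B⁻¹ * B = 1 := Matrix.nonsing_inv_mul B hBdet
    have hBBi : B * B⁻¹ = 1 := Matrix.mul_nonsing_inv B hBdet
    have hBt : Bᵀ = B := by
      rw [← Matrix.conjTranspose_eq_transpose_of_trivial]; exact hBpd.1
    have hBit : B⁻¹ᵀ = B⁻¹ := by rw [Matrix.transpose_nonsing_inv, hBt]
    set P := A * M * B⁻¹ * Mᵀ * A with hPdef
    have hMAAM : Mᵀ * A * (A * M) = B := by
      rw [hBdef, ← hAA]; simp only [Matrix.mul_assoc]
    have hPt : Pᵀ = P := by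
      rw [hPdef]
      simp only [Matrix.transpose_mul, Matrix.transpose_transpose, hAt, hBit, Matrix.mul_assoc]
    have hP2 : P * P = P := by
      calc P * P = A * M * B⁻¹ * (Mᵀ * A * (A * M)) * (B⁻¹ * (Mᵀ * A)) := by
            rw [hPdef]; simp only [Matrix.mul_assoc]
        _ = A * M * (B⁻¹ * B) * (B⁻¹ * (Mᵀ * A)) := by
            rw [hMAAM]; simp only [Matrix.mul_assoc]
        _ = A * M * (B⁻¹ * (Mᵀ * A)) := by rw [hBiB, Matrix.mul_one]
        _ = P := by rw [hPdef]; simp only [Matrix.mul_assoc]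
    have hPAM : P * (A * M) = A * M := by
      calc P * (A * M) = A * M * B⁻¹ * (Mᵀ * A * (A * M)) := by
            rw [hPdef]; simp only [Matrix.mul_assoc]
        _ = A * M * (B⁻¹ * B) := by rw [hMAAM]; simp only [Matrix.mul_assoc]
        _ = A * M := by rw [hBiB, Matrix.mul_one]
    have hrngP : LinearMap.range P.mulVecLin = LinearMap.range (A * M).mulVecLin := by
      refine le_antisymm ?_ ?_
      · have hPfac : P = (A * M) * (B⁻¹ * (Mᵀ * A)) := by
          rw [hPdef]; simp only [Matrix.mul_assoc]
        rw [hPfac]; exact range_mul_le _ _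
      · conv_lhs => rw [← hPAM]
        exact range_mul_le _ _
    have hrngAM : LinearMap.range (A * M).mulVecLin
        = Submodule.map A.mulVecLin (LinearMap.range M.mulVecLin) := range_mul_eq_map _ _
    have hPG : P = G * Gᵀ ↔ LinearMap.range M.mulVecLin = LinearMap.range G.mulVecLin := by
      constructor
      · intro h
        apply map_unit_inj A A' hA'A
        have e1 : Submodule.map A.mulVecLin (LinearMap.range M.mulVecLin)
            = LinearMap.range P.mulVecLin := by rw [← hrngAM, hrngP]
        rw [e1, h, hrngGGt, hrngG_fix]
      · intro h
        apply proj_unique hPt hP2 hGGt_sym hGGt_idem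
        rw [hrngP, hrngAM, h, hrngG_fix, hrngGGt]
    have hspan_iff : (Submodule.span ℝ (Set.range Mᵀ) = Submodule.span ℝ (Set.range Gᵀ))
        ↔ LinearMap.range M.mulVecLin = LinearMap.range G.mulVecLin := by
      rw [Matrix.range_mulVecLin, Matrix.range_mulVecLin]
      exact Iff.rfl
    -- the projected matrix in the eigenbasis
    set R := Qᵀ * P * Q with hRdef
    have hRt : Rᵀ = R := by
      rw [hRdef]
      simp only [Matrix.transpose_mul, Matrix.transpose_transpose, hPt, Matrix.mul_assoc]
    have hR2 : R * R = R := by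
      calc R * R = Qᵀ * P * (Q * Qᵀ) * (P * Q) := by rw [hRdef]; simp only [Matrix.mul_assoc]
        _ = Qᵀ * (P * P) * Q := by rw [hQQt]; simp only [Matrix.mul_one, Matrix.mul_assoc]
        _ = R := by rw [hP2, hRdef]
    have hPQRQ : P = Q * R * Qᵀ := by
      calc P = (Q * Qᵀ) * P * (Q * Qᵀ) := by rw [hQQt, Matrix.one_mul, Matrix.mul_one]
        _ = Q * R * Qᵀ := by rw [hRdef]; simp only [Matrix.mul_assoc]
    have htr_main : (S - S * M * B⁻¹ * Mᵀ * S).trace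
        = (∑ i, lam i) - ∑ i, lam i * R i i := by
      rw [Matrix.trace_sub, htrS]
      congr 1
      have e1 : S * M * B⁻¹ * Mᵀ * S = A * P * A := by
        rw [hPdef, ← hAA]; simp only [Matrix.mul_assoc]
      rw [e1, Matrix.trace_mul_cycle, hAA, hdecomp]
      have e2 : Q * Matrix.diagonal lam * Qᵀ * P
          = Q * (Matrix.diagonal lam * (Qᵀ * P)) := by simp only [Matrix.mul_assoc]
      rw [e2, Matrix.trace_mul_comm]
      have e3 : Matrix.diagonal lam * (Qᵀ * P) * Q = Matrix.diagonal lam * R := by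
        rw [hRdef]; simp only [Matrix.mul_assoc]
      rw [e3]
      simp [Matrix.trace, Matrix.diag, Matrix.diagonal_mul]
    have htrP : P.trace = (k : ℝ) := by
      rw [hPdef]
      calc (A * M * B⁻¹ * Mᵀ * A).trace = ((A * M * B⁻¹) * (Mᵀ * A)).trace := by
            simp only [Matrix.mul_assoc]
        _ = ((Mᵀ * A) * (A * M * B⁻¹)).trace := Matrix.trace_mul_comm _ _
        _ = (Mᵀ * A * (A * M) * B⁻¹).trace := by simp only [Matrix.mul_assoc]
        _ = (B * B⁻¹).trace := by rw [hMAAM]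
        _ = (1 : Matrix (Fin k) (Fin k) ℝ).trace := by rw [hBBi]
        _ = (k : ℝ) := by rw [Matrix.trace_one]; simp
    have htrR : ∑ i, R i i = (k : ℝ) := by
      have hRP : R.trace = P.trace := by
        rw [hRdef]
        calc (Qᵀ * P * Q).trace = (Q * (Qᵀ * P)).trace := by
              rw [Matrix.trace_mul_comm (Qᵀ * P) Q]
          _ = ((Q * Qᵀ) * P).trace := by simp only [Matrix.mul_assoc]
          _ = P.trace := by rw [hQQt, Matrix.one_mul]
      have h2 := hRP.trans htrP
      simpa [Matrix.trace, Matrix.diag] using h2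
    have hRsplit : ∑ i ∈ ltk, R i i + ∑ i ∈ gek, R i i = (k : ℝ) := by
      rw [← hsplit]; exact htrR
    have hkey : (∑ i ∈ ltk, lam i) - (∑ i, lam i * R i i)
        = ∑ i ∈ ltk, (lam i - c) * (1 - R i i) + ∑ j ∈ gek, (c - lam j) * R j j := by
      rw [hsplit (fun i => lam i * R i i)]
      have e1 : ∑ i ∈ ltk, (lam i - c) * (1 - R i i)
          = (∑ i ∈ ltk, lam i) - (∑ i ∈ ltk, lam i * R i i)
            - (k : ℝ) * c + c * ∑ i ∈ ltk, R i i := by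
        calc ∑ i ∈ ltk, (lam i - c) * (1 - R i i)
            = ∑ i ∈ ltk, (lam i - lam i * R i i - (c - c * R i i)) :=
              Finset.sum_congr rfl (fun i _ => by ring)
          _ = _ := by
              rw [Finset.sum_sub_distrib, Finset.sum_sub_distrib, Finset.sum_sub_distrib,
                Finset.sum_const, hcard, nsmul_eq_mul, ← Finset.mul_sum]
              ring
      have e2 : ∑ j ∈ gek, (c - lam j) * R j j
          = c * (∑ j ∈ gek, R j j) - ∑ j ∈ gek, lam j * R j j := by
        calc ∑ j ∈ gek, (c - lam j) * R j j
            = ∑ j ∈ gek, (c * R j j - lam j * R j j) :=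
              Finset.sum_congr rfl (fun j _ => by ring)
          _ = _ := by rw [Finset.sum_sub_distrib, ← Finset.mul_sum]
      rw [e1, e2]
      linear_combination (-c) * hRsplit
    have hterm1 : ∀ i ∈ ltk, 0 ≤ (lam i - c) * (1 - R i i) := fun i hi =>
      mul_nonneg (by linarith [hc1 i hi]) (by linarith [diag_le_one hRt hR2 i])
    have hterm2 : ∀ j ∈ gek, 0 ≤ (c - lam j) * R j j := fun j hj =>
      mul_nonneg (by linarith [hc2 j hj]) (diag_nonneg hRt hR2 j)
    have hineq : ∑ i, lam i * R i i ≤ ∑ i ∈ ltk, lam i := by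
      have h0 : 0 ≤ ∑ i ∈ ltk, (lam i - c) * (1 - R i i)
          + ∑ j ∈ gek, (c - lam j) * R j j :=
        add_nonneg (Finset.sum_nonneg hterm1) (Finset.sum_nonneg hterm2)
      linarith [hkey]
    refine ⟨?_, ?_, ?_⟩
    · rw [htr_main]
      have := hsplit lam
      linarith [hineq]
    · intro heq
      rw [htr_main] at heq
      have hltot := hsplit lam
      have heq2 : ∑ i, lam i * R i i = ∑ i ∈ ltk, lam i := by linarith
      have hzero : ∑ i ∈ ltk, (lam i - c) * (1 - R i i)
          + ∑ j ∈ gek, (c - lam j) * R j j = 0 := by linarith [hkey]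
      have hz1 : ∑ i ∈ ltk, (lam i - c) * (1 - R i i) = 0 :=
        le_antisymm (by linarith [Finset.sum_nonneg hterm2]) (Finset.sum_nonneg hterm1)
      have hR1 : ∀ i ∈ ltk, R i i = 1 := by
        intro i hi
        have hterm := (Finset.sum_eq_zero_iff_of_nonneg hterm1).mp hz1 i hi
        have hlc : 0 < lam i - c := by linarith [hc1 i hi]
        rcases mul_eq_zero.mp hterm with h | h
        · exact absurd h (ne_of_gt hlc)
        · linarith
      have hsum1 : ∑ i ∈ ltk, R i i = (k : ℝ) := by
        rw [Finset.sum_congr rfl hR1, Finset.sum_const, hcard, nsmul_eq_mul, mul_one]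
      have hgz : ∑ j ∈ gek, R j j = 0 := by linarith [hRsplit]
      have hR0 : ∀ j ∈ gek, R j j = 0 :=
        (Finset.sum_eq_zero_iff_of_nonneg (fun j _ => diag_nonneg hRt hR2 j)).mp hgz
      have hREE : R = Ek * Ekᵀ := by
        ext i j
        rw [hEEt]
        by_cases hik : (i : ℕ) < k
        · have hRii : R i i = 1 := hR1 i (by rw [hltk]; simp [hik])
          by_cases hij : i = j
          · subst hij; rw [if_pos ⟨rfl, hik⟩, hRii]
          · rw [if_neg (fun h => hij h.1),
              off_diag_zero hRt hR2 hRii (fun h => hij h.symm)]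
        · have hRii : R i i = 0 := hR0 i (by rw [hgek]; simp [le_of_not_gt hik])
          rw [row_eq_zero hRt hR2 hRii j, if_neg (fun h => hik h.2)]
      have hPGG : P = G * Gᵀ := by
        rw [hPQRQ, hREE, hGE]
        calc Q * (Ek * Ekᵀ) * Qᵀ = (Q * Ek) * (Ekᵀ * Qᵀ) := by simp only [Matrix.mul_assoc]
          _ = (Q * Ek) * (Q * Ek)ᵀ := by rw [Matrix.transpose_mul]
      exact hspan_iff.mpr (hPG.mp hPGG)
    · intro hspan
      have hPGG : P = G * Gᵀ := hPG.mpr (hspan_iff.mp hspan)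
      have hREE : R = Ek * Ekᵀ := by
        rw [hRdef, hPGG, hGE]
        calc Qᵀ * (Q * Ek * (Q * Ek)ᵀ) * Q
            = (Qᵀ * Q) * (Ek * Ekᵀ) * (Qᵀ * Q) := by
              rw [Matrix.transpose_mul]; simp only [Matrix.mul_assoc]
          _ = Ek * Ekᵀ := by rw [hQ, Matrix.one_mul, Matrix.mul_one]
      have hdiag : ∀ i, R i i = if (i : ℕ) < k then 1 else 0 := by
        intro i
        rw [hREE, hEEt]
        by_cases hik : (i : ℕ) < k
        · rw [if_pos ⟨rfl, hik⟩, if_pos hik]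
        · rw [if_neg (fun h => hik h.2), if_neg hik]
      have ht : ∑ i, lam i * R i i = ∑ i ∈ ltk, lam i := by
        rw [hsplit (fun i => lam i * R i i)]
        have e1 : ∑ i ∈ ltk, lam i * R i i = ∑ i ∈ ltk, lam i :=
          Finset.sum_congr rfl (fun i hi => by
            rw [hdiag]
            rw [hltk] at hi
            simp only [Finset.mem_filter, Finset.mem_univ, true_and] at hi
            rw [if_pos hi, mul_one])
        have e2 : ∑ j ∈ gek, lam j * R j j = 0 :=
          Finset.sum_eq_zero (fun j hj => by
            rw [hdiag]
            rw [hgek] at hj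
            simp only [Finset.mem_filter, Finset.mem_univ, true_and] at hj
            rw [if_neg (not_lt.mpr hj), mul_zero])
        rw [e1, e2, add_zero]
      rw [htr_main, ht]
      have := hsplit lam
      linarith
  exact ⟨key, hGtG, (key G hGtG).2.mpr rfl⟩
end

section
/- Let e : ℝ^p → ℝ^p be a measurable bijection with measurable inverse such that e(X) has the law of ε ~ N(0, I_p), where X ~ P*. Define d* = e^{-1}. Then for every k ∈ {0,…,p} and P*-a.e. x, the random variable d*(e_{1:k}(x), ε_{(k+1):p}), with ε_{(k+1):p} ~ N(0, I_{p−k}) independent, has the conditional distribution of X given e_{1:k}(X) = e_{1:k}(x). -/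
open MeasureTheory ProbabilityTheory Matrix

/-- Standard Gaussian measure on `ℝ^n` (product of `n` standard normals). -/
noncomputable def stdGaussian (n : ℕ) : Measure (EuclideanSpace ℝ (Fin n)) :=
  (Measure.pi fun _ : Fin n => gaussianReal 0 1).map
    (MeasurableEquiv.toLp 2 (Fin n → ℝ))

instance {n : ℕ} : IsProbabilityMeasure (stdGaussian n) :=
  Measure.isProbabilityMeasure_map (MeasurableEquiv.measurable _).aemeasurable

lemma stdGaussian_eq_pi (p : ℕ) :
    stdGaussian p = (Measure.pi fun _ : Fin p => gaussianReal 0 1 : Measure (Fin p → ℝ)).map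
      (WithLp.toLp 2) := by
  rw [_root_.stdGaussian]
  rfl

private lemma measurable_merge (p k : ℕ) :
    Measurable (fun q : (Fin p → ℝ) × (Fin p → ℝ) =>
      fun i : Fin p => if (i : ℕ) < k then q.1 i else q.2 i) := by
  refine measurable_pi_lambda _ fun i => ?_
  by_cases h : (i : ℕ) < k
  · simp only [if_pos h]; exact (measurable_pi_apply i).comp measurable_fst
  · simp only [if_neg h]; exact (measurable_pi_apply i).comp measurable_snd

private lemma merge_map_pi (p k : ℕ) :
    ((Measure.pi fun _ : Fin p => gaussianReal 0 1).prod
        (Measure.pi fun _ : Fin p => gaussianReal 0 1)).map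
      (fun q : (Fin p → ℝ) × (Fin p → ℝ) =>
        fun i : Fin p => if (i : ℕ) < k then q.1 i else q.2 i)
      = Measure.pi fun _ : Fin p => gaussianReal 0 1 := by
  classical
  have key : ∀ A : Fin p → Set ℝ, (∀ i, MeasurableSet (A i)) →
      (((Measure.pi fun _ : Fin p => gaussianReal 0 1).prod
        (Measure.pi fun _ : Fin p => gaussianReal 0 1)).map
      (fun q : (Fin p → ℝ) × (Fin p → ℝ) =>
        fun i : Fin p => if (i : ℕ) < k then q.1 i else q.2 i)) (Set.pi Set.univ A)
      = ∏ i : Fin p, gaussianReal 0 1 (A i) := ?_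
  · exact (Measure.pi_eq key).symm
  intro A hA
  rw [Measure.map_apply (measurable_merge p k) (MeasurableSet.univ_pi hA)]
  have hpre : (fun q : (Fin p → ℝ) × (Fin p → ℝ) =>
        fun i : Fin p => if (i : ℕ) < k then q.1 i else q.2 i) ⁻¹' Set.pi Set.univ A
      = (Set.pi Set.univ fun i : Fin p => if (i : ℕ) < k then A i else Set.univ) ×ˢ
        (Set.pi Set.univ fun i : Fin p => if (i : ℕ) < k then Set.univ else A i) := by
    ext ⟨z, ε⟩
    simp only [Set.mem_preimage, Set.mem_pi, Set.mem_univ, true_implies, Set.mem_prod]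
    constructor
    · intro h
      constructor <;> intro i <;> by_cases hi : (i : ℕ) < k <;>
        simpa [hi] using h i
    · rintro ⟨h1, h2⟩ i
      by_cases hi : (i : ℕ) < k
      · simpa [hi] using h1 i
      · simpa [hi] using h2 i
  rw [hpre, Measure.prod_prod, Measure.pi_pi, Measure.pi_pi, ← Finset.prod_mul_distrib]
  refine Finset.prod_congr rfl fun i _ => ?_
  by_cases hi : (i : ℕ) < k <;> simp [hi]

/-- Let `e : ℝ^p → ℝ^p` be a measurable bijection with measurable inverse
(i.e. a `MeasurableEquiv`) such that `e(X) ~ N(0, I_p)` where `X ~ P*`, and set `d* = e⁻¹`.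
Then for every `k ≤ p` and `P*`-a.e. `x`, the law of `d*(e_{1:k}(x), ε_{(k+1):p})`, with
`ε` standard Gaussian noise (of which only the coordinates after `k` are used), equals the
conditional distribution of `X` given `e_{1:k}(X) = e_{1:k}(x)`. -/
theorem stmt8 {p : ℕ} (P : Measure (EuclideanSpace ℝ (Fin p))) [IsProbabilityMeasure P]
    (e : EuclideanSpace ℝ (Fin p) ≃ᵐ EuclideanSpace ℝ (Fin p))
    (hlaw : P.map e = stdGaussian p) :
    ∀ (k : ℕ) (hk : k ≤ p),
      ∀ᵐ x ∂P,
        Measure.map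
            (fun ε : EuclideanSpace ℝ (Fin p) =>
              e.symm ((EuclideanSpace.equiv (Fin p) ℝ).symm
                (fun i : Fin p => if (i : ℕ) < k then e x i else ε i)))
            (stdGaussian p)
          = condDistrib id
              (fun y : EuclideanSpace ℝ (Fin p) =>
                (EuclideanSpace.equiv (Fin k) ℝ).symm (fun i : Fin k => e y (Fin.castLE hk i)))
              P
              ((EuclideanSpace.equiv (Fin k) ℝ).symm
                (fun i : Fin k => e x (Fin.castLE hk i))) := by
  intro k hk
  classical
  set μ : Measure (EuclideanSpace ℝ (Fin p)) := stdGaussian p with hμ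
  set X : EuclideanSpace ℝ (Fin p) → EuclideanSpace ℝ (Fin k) :=
    fun y => (EuclideanSpace.equiv (Fin k) ℝ).symm (fun i : Fin k => e y (Fin.castLE hk i))
    with hX_def
  have hXmeas : Measurable X := by
    have : Measurable fun y : EuclideanSpace ℝ (Fin p) =>
        (fun i : Fin k => e y (Fin.castLE hk i) : Fin k → ℝ) :=
      measurable_pi_lambda _ fun i => (measurable_pi_apply _).comp ((WithLp.measurable_ofLp 2 _).comp e.measurable)
    exact (WithLp.measurable_toLp 2 _).comp this
  -- the projection on the Gaussian side
  set proj : EuclideanSpace ℝ (Fin p) → EuclideanSpace ℝ (Fin k) :=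
    fun z => (EuclideanSpace.equiv (Fin k) ℝ).symm (fun i : Fin k => z (Fin.castLE hk i))
    with hproj_def
  have hprojmeas : Measurable proj := by
    have : Measurable fun z : EuclideanSpace ℝ (Fin p) =>
        (fun i : Fin k => z (Fin.castLE hk i) : Fin k → ℝ) :=
      measurable_pi_lambda _ fun i => (measurable_pi_apply _).comp (WithLp.measurable_ofLp 2 _)
    exact (WithLp.measurable_toLp 2 _).comp this
  have hXe : ∀ z, X (e.symm z) = proj z := by
    intro z
    show (EuclideanSpace.equiv (Fin k) ℝ).symm (fun i : Fin k => e (e.symm z) (Fin.castLE hk i))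
      = (EuclideanSpace.equiv (Fin k) ℝ).symm (fun i : Fin k => z (Fin.castLE hk i))
    rw [e.apply_symm_apply]
  -- combine function
  set F : EuclideanSpace ℝ (Fin k) × EuclideanSpace ℝ (Fin p) → EuclideanSpace ℝ (Fin p) :=
    fun q => e.symm ((EuclideanSpace.equiv (Fin p) ℝ).symm
      (fun i : Fin p => if h : (i : ℕ) < k then q.1 ⟨i, h⟩ else q.2 i)) with hF_def
  have hFmeas : Measurable F := by
    refine e.symm.measurable.comp ?_
    have : Measurable fun q : EuclideanSpace ℝ (Fin k) × EuclideanSpace ℝ (Fin p) =>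
        (fun i : Fin p => if h : (i : ℕ) < k then q.1 ⟨i, h⟩ else q.2 i : Fin p → ℝ) := by
      refine measurable_pi_lambda _ fun i => ?_
      by_cases h : (i : ℕ) < k
      · simp only [dif_pos h]; exact (measurable_pi_apply _).comp ((WithLp.measurable_ofLp 2 _).comp measurable_fst)
      · simp only [dif_neg h]; exact (measurable_pi_apply _).comp ((WithLp.measurable_ofLp 2 _).comp measurable_snd)
    exact (WithLp.measurable_toLp 2 _).comp this
  -- the candidate kernel
  set κ : Kernel (EuclideanSpace ℝ (Fin k)) (EuclideanSpace ℝ (Fin p)) :=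
    Kernel.map ((Kernel.deterministic (id : EuclideanSpace ℝ (Fin k) → _) measurable_id)
      ×ₖ Kernel.const _ μ) F with hκ_def
  haveI : IsMarkovKernel κ := Kernel.IsMarkovKernel.map _ hFmeas
  have hκ_apply : ∀ b, κ b = μ.map (fun ε => F (b, ε)) := by
    intro b
    rw [hκ_def, Kernel.map_apply _ hFmeas, Kernel.prod_apply, Kernel.deterministic_apply,
      Kernel.const_apply, Measure.dirac_prod, Measure.map_map hFmeas measurable_prodMk_left]
    rfl
  -- the law of P via e
  have hP : P = μ.map e.symm := by
    rw [← hlaw, MeasurableEquiv.map_symm_map]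
  have hPX : P.map X = μ.map proj := by
    rw [hP, Measure.map_map hXmeas e.symm.measurable]
    exact congrArg (fun f => Measure.map f μ) (funext hXe)
  haveI : IsProbabilityMeasure (P.map X) := Measure.isProbabilityMeasure_map hXmeas.aemeasurable
  -- merge measure fact
  set Φ : EuclideanSpace ℝ (Fin p) × EuclideanSpace ℝ (Fin p) → EuclideanSpace ℝ (Fin p) :=
    fun q => (EuclideanSpace.equiv (Fin p) ℝ).symm
      (fun i : Fin p => if (i : ℕ) < k then q.1 i else q.2 i) with hΦ_def
  have hΦmeas : Measurable Φ := (WithLp.measurable_toLp 2 _).comp ((measurable_merge p k).comp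
    ((WithLp.measurable_ofLp 2 _).prodMap (WithLp.measurable_ofLp 2 _)))
  have hmerge : (μ.prod μ).map Φ = μ := by
    rw [hμ, stdGaussian_eq_pi, Measure.map_prod_map _ _ (WithLp.measurable_toLp 2 _)
      (WithLp.measurable_toLp 2 _), Measure.map_map hΦmeas
      ((WithLp.measurable_toLp 2 _).prodMap (WithLp.measurable_toLp 2 _))]
    conv_rhs => rw [← merge_map_pi p k, Measure.map_map (WithLp.measurable_toLp 2 _)
      (measurable_merge p k)]
    rfl
  -- e.symm (Φ (z, ε)) = F (proj z, ε)
  have hΦF : ∀ z ε, e.symm (Φ (z, ε)) = F (proj z, ε) := by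
    intro z ε
    refine congrArg (fun v => e.symm ((EuclideanSpace.equiv (Fin p) ℝ).symm v)) ?_
    show (fun i : Fin p => if (i : ℕ) < k then z i else ε i : Fin p → ℝ)
      = fun i : Fin p => if h : (i : ℕ) < k then proj z ⟨i, h⟩ else ε i
    funext i
    by_cases h : (i : ℕ) < k
    · rw [if_pos h, dif_pos h]; rfl
    · rw [if_neg h, dif_neg h]
  -- proj (Φ (z, ε)) = proj z
  have hprojΦ : ∀ z ε, proj (Φ (z, ε)) = proj z := by
    intro z ε
    refine congrArg (EuclideanSpace.equiv (Fin k) ℝ).symm ?_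
    show (fun j : Fin k => if ((Fin.castLE hk j : Fin p) : ℕ) < k then z (Fin.castLE hk j)
        else ε (Fin.castLE hk j) : Fin k → ℝ)
      = fun j : Fin k => z (Fin.castLE hk j)
    funext j
    rw [if_pos (by simpa using j.isLt)]
  -- the compProd identity
  have hcomp : P.map (fun x => (X x, x)) = (P.map X) ⊗ₘ κ := by
    refine ext_of_generate_finite _ generateFrom_prod.symm isPiSystem_prod ?_ ?_
    · rintro _ ⟨s, hs, t, ht, rfl⟩
      simp only [Set.mem_setOf_eq] at hs ht
      show (Measure.map (fun x => (X x, x)) P) (s ×ˢ t) = (Measure.map X P ⊗ₘ κ) (s ×ˢ t)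
      rw [Measure.map_apply
          (show Measurable fun x : EuclideanSpace ℝ (Fin p) => (X x, x) from
            hXmeas.prodMk measurable_id) (hs.prod ht),
        Measure.compProd_apply_prod hs ht]
      have hpre1 : (fun x => (X x, x)) ⁻¹' (s ×ˢ t) = X ⁻¹' s ∩ t := by
        ext x; simp [Set.mem_prod]
      rw [hpre1, hPX, setLIntegral_map hs (κ.measurable_coe ht) hprojmeas,
        hP, Measure.map_apply e.symm.measurable ((hXmeas hs).inter ht)]
      have hpre2 : ⇑e.symm ⁻¹' (X ⁻¹' s ∩ t) = proj ⁻¹' s ∩ ⇑e.symm ⁻¹' t := by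
        ext z
        simp only [Set.mem_preimage, Set.mem_inter_iff, hXe]
      rw [hpre2]
      conv_lhs => rw [← hmerge,
        Measure.map_apply hΦmeas ((hprojmeas hs).inter (e.symm.measurable ht))]
      rw [Measure.prod_apply (hΦmeas ((hprojmeas hs).inter (e.symm.measurable ht)))]
      have hfib : (fun z => μ (Prod.mk z ⁻¹' (Φ ⁻¹' (proj ⁻¹' s ∩ ⇑e.symm ⁻¹' t))))
          = Set.indicator (proj ⁻¹' s) (fun z => κ (proj z) t) := by
        funext z
        by_cases hz : proj z ∈ s
        · rw [Set.indicator_of_mem (show z ∈ proj ⁻¹' s from hz)]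
          have hset : Prod.mk z ⁻¹' (Φ ⁻¹' (proj ⁻¹' s ∩ ⇑e.symm ⁻¹' t))
              = (fun ε => F (proj z, ε)) ⁻¹' t := by
            ext ε
            simp only [Set.mem_preimage, Set.mem_inter_iff, hprojΦ, hz, true_and, ← hΦF]
          rw [hset, hκ_apply,
            Measure.map_apply
              (show Measurable fun ε => F (proj z, ε) from
                hFmeas.comp measurable_prodMk_left) ht]
        · rw [Set.indicator_of_notMem (show z ∉ proj ⁻¹' s from hz)]
          have hset : Prod.mk z ⁻¹' (Φ ⁻¹' (proj ⁻¹' s ∩ ⇑e.symm ⁻¹' t)) = ∅ := by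
            ext ε
            simp only [Set.mem_preimage, Set.mem_inter_iff, hprojΦ, hz, false_and,
              Set.mem_empty_iff_false]
          rw [hset]; exact measure_empty
      rw [hfib, lintegral_indicator (hprojmeas hs)]
    · rw [Measure.map_apply
          (show Measurable fun x : EuclideanSpace ℝ (Fin p) => (X x, x) from
            hXmeas.prodMk measurable_id) MeasurableSet.univ]
      simp
  -- conclude via uniqueness of condDistrib
  have huniq := condDistrib_ae_eq_of_measure_eq_compProd (μ := P) X measurable_id.aemeasurable (κ := κ)
    (by simpa using hcomp)
  have huniq' : ∀ᵐ x ∂P, κ (X x) = condDistrib id X P (X x) :=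
    ae_of_ae_map hXmeas.aemeasurable huniq.symm
  filter_upwards [huniq'] with x hx
  have hTx : ((EuclideanSpace.equiv (Fin k) ℝ).symm
      (fun i : Fin k => e x (Fin.castLE hk i))) = X x := rfl
  rw [hTx, ← hx, hκ_apply]
  refine congrArg (fun f => Measure.map f μ) ?_
  funext ε
  show e.symm ((EuclideanSpace.equiv (Fin p) ℝ).symm
      (fun i : Fin p => if (i : ℕ) < k then e x i else ε i))
    = e.symm ((EuclideanSpace.equiv (Fin p) ℝ).symm
      (fun i : Fin p => if h : (i : ℕ) < k then X x ⟨i, h⟩ else ε i))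
  refine congrArg (fun v => e.symm ((EuclideanSpace.equiv (Fin p) ℝ).symm v)) ?_
  show (fun i : Fin p => if (i : ℕ) < k then e x i else ε i : Fin p → ℝ)
    = fun i : Fin p => if h : (i : ℕ) < k then e x (Fin.castLE hk ⟨(i : ℕ), h⟩) else ε i
  funext i
  by_cases h : (i : ℕ) < k
  · rw [if_pos h, dif_pos h]; rfl
  · rw [if_neg h, dif_neg h]
end

section
/- In the Gaussian linear-encoder setting with all eigenvalues distinct (λ_1 > λ_2 > … > λ_p), consider for each k the loss L_k(M) = tr(Σ* − Σ*M_{:k}(M_{:k}^⊤Σ*M_{:k})^{-1}M_{:k}^⊤Σ*), where M ∈ ℝ^{p×p} is orthogonal and M_{:k} its first k columns. Then for any strictly positive weights ω_0,…,ω_p, the weighted sum Σ_k ω_k L_k(M) is minimized (uniquely up to column signs) at M = Q, the eigenvector matrix ordered by decreasing eigenvalues; moreover M = Q simultaneously minimizes every L_k. -/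
open Matrix Finset

/-- `L_k(M) = tr(Σ* − Σ*M_{:k}(M_{:k}ᵀΣ*M_{:k})⁻¹M_{:k}ᵀΣ*)`. -/
noncomputable def Lk {p : ℕ} (S M : Matrix (Fin p) (Fin p) ℝ) (k : ℕ) : ℝ :=
  (S - S * firstCols M k * ((firstCols M k)ᵀ * S * firstCols M k)⁻¹ * (firstCols M k)ᵀ * S).trace

lemma sum_ind {p k : ℕ} (hk : k ≤ p) : ∑ j : Fin p, (if (j:ℕ) < k then (1:ℝ) else 0) = k := by
  rw [Fin.sum_univ_eq_sum_range (fun j => if j < k then (1:ℝ) else 0)]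
  rw [← Finset.sum_subset (Finset.range_subset_range.2 hk)
    (fun x _ hx => by simp only [Finset.mem_range, not_lt] at hx; simp [Nat.not_lt.2 hx])]
  trans ∑ _x ∈ Finset.range k, (1:ℝ)
  · exact Finset.sum_congr rfl (fun x hx => by simp [Finset.mem_range.1 hx])
  · simp

lemma scalar_lemma {p k : ℕ} (hk : k ≤ p) (lam d : Fin p → ℝ)
    (hpos : ∀ j, 0 < lam j) (hmono : ∀ i j : Fin p, i < j → lam j < lam i)
    (hd0 : ∀ j, 0 ≤ d j) (hd1 : ∀ j, d j ≤ 1) (hsum : ∑ j, d j = k) :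
    ∑ j, lam j * d j ≤ ∑ j : Fin p, (if (j:ℕ) < k then lam j else 0) ∧
    (∑ j, lam j * d j = ∑ j : Fin p, (if (j:ℕ) < k then lam j else 0) ↔
      ∀ j : Fin p, d j = if (j:ℕ) < k then 1 else 0) := by
  set c : ℝ := if h : k < p then lam ⟨k, h⟩ else 0 with hc
  set t : Fin p → ℝ := fun j => if (j:ℕ) < k then (lam j - c) * (1 - d j) else (c - lam j) * d j with ht
  have hcle : ∀ j : Fin p, (j:ℕ) < k → c < lam j := by
    intro j hj
    rcases lt_or_ge k p with h | h
    · simp only [hc, dif_pos h]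
      exact hmono j ⟨k, h⟩ (Fin.lt_def.mpr hj)
    · simp only [hc, dif_neg (not_lt.2 h)]; exact hpos j
  have hcge : ∀ j : Fin p, k ≤ (j:ℕ) → lam j ≤ c := by
    intro j hj
    have h : k < p := lt_of_le_of_lt hj j.isLt
    simp only [hc, dif_pos h]
    rcases eq_or_lt_of_le hj with h2 | h2
    · exact le_of_eq (congrArg lam (Fin.ext h2)).symm
    · exact le_of_lt (hmono ⟨k, h⟩ j (Fin.lt_def.mpr h2))
  have htnn : ∀ j : Fin p, 0 ≤ t j := by
    intro j
    by_cases hj : (j:ℕ) < k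
    · simp only [ht, if_pos hj]
      exact mul_nonneg (le_of_lt (sub_pos.2 (hcle j hj))) (sub_nonneg.2 (hd1 j))
    · simp only [ht, if_neg hj]
      exact mul_nonneg (sub_nonneg.2 (hcge j (not_lt.1 hj))) (hd0 j)
  have hkey : ∑ j, t j = (∑ j : Fin p, (if (j:ℕ) < k then lam j else 0)) - ∑ j, lam j * d j := by
    have e1 : ∀ j : Fin p, t j = (if (j:ℕ) < k then lam j else 0) - lam j * d j
        + c * (d j - (if (j:ℕ) < k then (1:ℝ) else 0)) := by
      intro j; by_cases hj : (j:ℕ) < k <;> simp [ht, hj] <;> ring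
    rw [Finset.sum_congr rfl (fun j _ => e1 j)]
    rw [Finset.sum_add_distrib, Finset.sum_sub_distrib, ← Finset.mul_sum, Finset.sum_sub_distrib,
      hsum, sum_ind hk, sub_self, mul_zero, add_zero]
  constructor
  · have : (0:ℝ) ≤ ∑ j, t j := Finset.sum_nonneg (fun j _ => htnn j)
    rw [hkey] at this; linarith
  constructor
  · intro heq
    have hzero : ∑ j, t j = 0 := by rw [hkey, heq, sub_self]
    have hall : ∀ j ∈ Finset.univ, t j = 0 :=
      (Finset.sum_eq_zero_iff_of_nonneg (fun j _ => htnn j)).1 hzero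
    -- from t j = 0: j < k ⇒ d j = 1 ; j > k ⇒ d j = 0
    have hlt : ∀ j : Fin p, (j:ℕ) < k → d j = 1 := by
      intro j hj
      have := hall j (Finset.mem_univ j)
      simp only [ht, if_pos hj] at this
      rcases mul_eq_zero.1 this with h | h
      · exact absurd h (ne_of_gt (sub_pos.2 (hcle j hj)))
      · linarith
    have hgt : ∀ j : Fin p, k < (j:ℕ) → d j = 0 := by
      intro j hj
      have := hall j (Finset.mem_univ j)
      simp only [ht, if_neg (by omega : ¬ (j:ℕ) < k)] at this
      rcases mul_eq_zero.1 this with h | h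
      · exfalso
        have h2 : k < p := lt_trans hj j.isLt
        have := hmono ⟨k, h2⟩ j (Fin.lt_def.mpr hj)
        simp only [hc, dif_pos h2] at h
        linarith
      · exact h
    intro j
    by_cases hj : (j:ℕ) < k
    · simp [hj, hlt j hj]
    rcases eq_or_lt_of_le (not_lt.1 hj) with h2 | h2
    · -- j = k case: use the sum
      simp only [if_neg hj]
      have hsum2 : ∑ i, d i = ∑ i : Fin p, ((if (i:ℕ) < k then (1:ℝ) else 0) + if i = j then d j else 0) := by
        apply Finset.sum_congr rfl
        intro i _
        by_cases hik : (i:ℕ) < k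
        · simp [hik, hlt i hik, show i ≠ j by intro h; omega]
        rcases eq_or_lt_of_le (not_lt.1 hik) with h3 | h3
        · have hij : i = j := by ext; omega
          subst hij
          simp [hik]
        · simp [hik, hgt i h3, show i ≠ j by intro h; omega]
      rw [Finset.sum_add_distrib, sum_ind hk, Finset.sum_ite_eq' Finset.univ j, if_pos (Finset.mem_univ j)] at hsum2
      rw [hsum] at hsum2
      linarith
    · simp [hj, hgt j h2]
  · intro hd
    apply Finset.sum_congr rfl
    intro j _
    rw [hd j]
    by_cases hj : (j:ℕ) < k <;> simp [hj]

lemma proj_diag_nonneg {n : ℕ} (P : Matrix (Fin n) (Fin n) ℝ) (hsym : Pᵀ = P)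
    (hidem : P * P = P) (j : Fin n) : P j j = ∑ i, (P i j)^2 := by
  conv_lhs => rw [← hidem]
  rw [Matrix.mul_apply]
  apply Finset.sum_congr rfl
  intro i _
  have h2 := congrFun (congrFun hsym i) j
  rw [Matrix.transpose_apply] at h2
  rw [h2]; ring

lemma keyC {p k : ℕ} (hk : k ≤ p) (lam : Fin p → ℝ)
    (hpos : ∀ j, 0 < lam j) (hmono : ∀ i j : Fin p, i < j → lam j < lam i)
    (B : Matrix (Fin p) (Fin k) ℝ) (hB : Bᵀ * B = 1) :
    (Matrix.diagonal lam * B * (Bᵀ * Matrix.diagonal lam * B)⁻¹ * Bᵀ * Matrix.diagonal lam).trace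
      ≤ ∑ j : Fin p, (if (j:ℕ) < k then lam j else 0) ∧
    ((Matrix.diagonal lam * B * (Bᵀ * Matrix.diagonal lam * B)⁻¹ * Bᵀ * Matrix.diagonal lam).trace
      = ∑ j : Fin p, (if (j:ℕ) < k then lam j else 0) ↔
      ∀ (i : Fin p) (j : Fin k), k ≤ (i:ℕ) → B i j = 0) := by
  set Λ : Matrix (Fin p) (Fin p) ℝ := Matrix.diagonal lam with hΛ
  set R : Matrix (Fin p) (Fin p) ℝ := Matrix.diagonal (fun i => Real.sqrt (lam i)) with hR
  have hRR : R * R = Λ := by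
    rw [hR, hΛ, Matrix.diagonal_mul_diagonal]
    exact congrArg Matrix.diagonal (funext fun i => Real.mul_self_sqrt (hpos i).le)
  set G : Matrix (Fin k) (Fin k) ℝ := Bᵀ * Λ * B with hGdef
  set C : Matrix (Fin p) (Fin k) ℝ := R * B with hC
  have hCt : Cᵀ = Bᵀ * R := by rw [hC, Matrix.transpose_mul, Matrix.diagonal_transpose]
  have hG : G = Cᵀ * C := by
    rw [hCt, hC, hGdef, ← hRR]
    simp only [Matrix.mul_assoc]
  have hGsym : Gᵀ = G := by
    rw [hGdef, Matrix.transpose_mul, Matrix.transpose_mul, Matrix.transpose_transpose,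
      Matrix.diagonal_transpose, Matrix.mul_assoc]
  -- B is injective: Bᵀ(Bv) = v
  have hBinj : ∀ v : Fin k → ℝ, v ≠ 0 → B *ᵥ v ≠ 0 := by
    intro v hv hBv
    apply hv
    have : Bᵀ *ᵥ (B *ᵥ v) = v := by rw [Matrix.mulVec_mulVec, hB, Matrix.one_mulVec]
    rw [hBv, Matrix.mulVec_zero] at this
    exact this.symm
  have hGdet : IsUnit G.det := by
    rw [isUnit_iff_ne_zero]
    intro hdet
    obtain ⟨v, hv, hGv⟩ := (Matrix.exists_mulVec_eq_zero_iff).2 hdet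
    have hq : v ⬝ᵥ (G *ᵥ v) = (B *ᵥ v) ⬝ᵥ (Λ *ᵥ (B *ᵥ v)) := by
      rw [hGdef, ← Matrix.mulVec_mulVec, ← Matrix.mulVec_mulVec,
        Matrix.dotProduct_mulVec, Matrix.vecMul_transpose]
    rw [hGv, dotProduct_zero] at hq
    have hw := hBinj v hv
    obtain ⟨i0, hi0⟩ := Function.ne_iff.1 hw
    have hpos2 : 0 < (B *ᵥ v) ⬝ᵥ (Λ *ᵥ (B *ᵥ v)) := by
      rw [dotProduct]
      apply Finset.sum_pos'
      · intro i _
        rw [hΛ, Matrix.mulVec_diagonal]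
        have := hpos i
        nlinarith [sq_nonneg ((B *ᵥ v) i)]
      · refine ⟨i0, Finset.mem_univ _, ?_⟩
        rw [hΛ, Matrix.mulVec_diagonal]
        have := hpos i0
        have h2 : (B *ᵥ v) i0 ≠ 0 := by simpa using hi0
        nlinarith [mul_pos (hpos i0) (mul_self_pos.mpr h2)]
    rw [← hq] at hpos2
    exact lt_irrefl 0 hpos2
  have hinv1 : G⁻¹ * G = 1 := Matrix.nonsing_inv_mul G hGdet
  have hinv2 : G * G⁻¹ = 1 := Matrix.mul_nonsing_inv G hGdet
  have hGinvsym : (G⁻¹)ᵀ = G⁻¹ := by rw [Matrix.transpose_nonsing_inv, hGsym]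
  set Pr : Matrix (Fin p) (Fin p) ℝ := C * G⁻¹ * Cᵀ with hPr
  have hCW : ∀ X : Matrix (Fin k) (Fin p) ℝ, Cᵀ * (C * X) = G * X := by
    intro X; rw [← Matrix.mul_assoc, ← hG]
  have hPrsym : Prᵀ = Pr := by
    rw [hPr, Matrix.transpose_mul (C * G⁻¹) Cᵀ, Matrix.transpose_mul C G⁻¹,
      Matrix.transpose_transpose C, hGinvsym, ← Matrix.mul_assoc]
  have hPridem : Pr * Pr = Pr := by
    rw [hPr]
    simp only [Matrix.mul_assoc]
    rw [hCW (G⁻¹ * Cᵀ), ← Matrix.mul_assoc G⁻¹ G (G⁻¹ * Cᵀ), hinv1, Matrix.one_mul]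
  have hPrC : Pr * C = C := by
    rw [hPr]
    simp only [Matrix.mul_assoc]
    rw [← hG, hinv1, Matrix.mul_one]
  have htrPr : Pr.trace = k := by
    rw [hPr, Matrix.mul_assoc, Matrix.trace_mul_comm, Matrix.mul_assoc, ← hG, hinv1]
    simp
  have hd0 : ∀ j, 0 ≤ Pr j j := by
    intro j
    rw [proj_diag_nonneg Pr hPrsym hPridem j]
    exact Finset.sum_nonneg (fun i _ => sq_nonneg _)
  have hd1 : ∀ j, Pr j j ≤ 1 := by
    intro j
    have hsym2 : (1 - Pr)ᵀ = 1 - Pr := by rw [Matrix.transpose_sub, Matrix.transpose_one, hPrsym]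
    have hidem2 : (1 - Pr) * (1 - Pr) = 1 - Pr := by
      rw [Matrix.sub_mul, Matrix.mul_sub Pr 1 Pr, hPridem, Matrix.one_mul, Matrix.mul_one]
      abel
    have := proj_diag_nonneg (1 - Pr) hsym2 hidem2 j
    have hnn : 0 ≤ (1 - Pr) j j := this ▸ Finset.sum_nonneg (fun i _ => sq_nonneg _)
    have : (1 - Pr) j j = 1 - Pr j j := by simp [Matrix.sub_apply, Matrix.one_apply]
    linarith [this ▸ hnn]
  have hsumd : ∑ j, Pr j j = (k:ℝ) := htrPr
  -- target trace = ∑ lam j * Pr j j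
  have htr : (Λ * B * (Bᵀ * Λ * B)⁻¹ * Bᵀ * Λ).trace = ∑ j, lam j * Pr j j := by
    have h1 : Λ * B * (Bᵀ * Λ * B)⁻¹ * Bᵀ * Λ = R * (Pr * R) := by
      rw [hPr, hC, hCt, ← hGdef, ← hRR]
      simp only [Matrix.mul_assoc]
    rw [h1, Matrix.trace_mul_comm, Matrix.mul_assoc, hRR]
    rw [Matrix.trace]
    apply Finset.sum_congr rfl
    intro j _
    rw [Matrix.diag_apply, hΛ, Matrix.mul_diagonal]
    ring
  obtain ⟨hle, hiff⟩ := scalar_lemma hk lam (fun j => Pr j j) hpos hmono hd0 hd1 hsumd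
  rw [htr]
  refine ⟨hle, ?_⟩
  rw [hiff]
  constructor
  · -- diag indicator ⇒ rows of B vanish
    intro hdiag i j hi
    have hPrii : Pr i i = 0 := by rw [hdiag i, if_neg (by omega)]
    have hcol : ∀ l, Pr l i = 0 := by
      intro l
      have := proj_diag_nonneg Pr hPrsym hPridem i
      rw [hPrii] at this
      have hz := (Finset.sum_eq_zero_iff_of_nonneg (fun l _ => sq_nonneg (Pr l i))).1 this.symm
      have := hz l (Finset.mem_univ l)
      exact pow_eq_zero_iff (by norm_num) |>.1 this
    have hrow : ∀ l, Pr i l = 0 := by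
      intro l
      have : Pr i l = Prᵀ l i := rfl
      rw [this, hPrsym, hcol l]
    have hCij : C i j = 0 := by
      have : C i j = (Pr * C) i j := by rw [hPrC]
      rw [this, Matrix.mul_apply]
      apply Finset.sum_eq_zero
      intro l _
      rw [hrow l, zero_mul]
    rw [hC, Matrix.diagonal_mul] at hCij
    have hs : Real.sqrt (lam i) ≠ 0 := ne_of_gt (Real.sqrt_pos.2 (hpos i))
    exact (mul_eq_zero.1 hCij).resolve_left hs
  · -- rows of B vanish ⇒ diag indicator
    intro hrows
    have hCrows : ∀ (i : Fin p) (j : Fin k), k ≤ (i:ℕ) → C i j = 0 := by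
      intro i j hi
      rw [hC, Matrix.diagonal_mul, hrows i j hi, mul_zero]
    have hPrz : ∀ (i j : Fin p), k ≤ (i:ℕ) → Pr i j = 0 := by
      intro i j hi
      rw [hPr, Matrix.mul_apply]
      apply Finset.sum_eq_zero
      intro l _
      rw [Matrix.mul_apply]
      rw [Finset.sum_eq_zero (fun m _ => by rw [hCrows i m hi, zero_mul]), zero_mul]
    have hdz : ∀ j : Fin p, k ≤ (j:ℕ) → Pr j j = 0 := fun j hj => hPrz j j hj
    -- now: ∑ (ind - d) = 0 with nonneg terms
    have hsz : ∑ j : Fin p, ((if (j:ℕ) < k then (1:ℝ) else 0) - Pr j j) = 0 := by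
      rw [Finset.sum_sub_distrib, sum_ind hk, hsumd, sub_self]
    have hterm : ∀ j : Fin p, 0 ≤ (if (j:ℕ) < k then (1:ℝ) else 0) - Pr j j := by
      intro j
      by_cases hj : (j:ℕ) < k
      · simp only [if_pos hj]; linarith [hd1 j]
      · simp only [if_neg hj]; rw [hdz j (not_lt.1 hj)]; norm_num
    have hall := (Finset.sum_eq_zero_iff_of_nonneg (fun j _ => hterm j)).1 hsz
    intro j
    have := hall j (Finset.mem_univ j)
    linarith [this]

lemma firstCols_mul {p k : ℕ} (hk : k ≤ p) (Qt M : Matrix (Fin p) (Fin p) ℝ) :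
    Qt * firstCols M k = firstCols (Qt * M) k := by
  ext i j
  have hj : (j:ℕ) < p := lt_of_lt_of_le j.isLt hk
  simp [firstCols, Matrix.mul_apply, hj]

lemma firstCols_orth {p k : ℕ} (hk : k ≤ p) (M : Matrix (Fin p) (Fin p) ℝ)
    (hM : Mᵀ * M = 1) : (firstCols M k)ᵀ * firstCols M k = 1 := by
  ext a b
  have ha : (a:ℕ) < p := lt_of_lt_of_le a.isLt hk
  have hb : (b:ℕ) < p := lt_of_lt_of_le b.isLt hk
  have h := congrFun (congrFun hM ⟨a, ha⟩) ⟨b, hb⟩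
  rw [Matrix.mul_apply] at h
  rw [Matrix.mul_apply]
  have hl : ∀ i : Fin p, (firstCols M k)ᵀ a i * firstCols M k i b = Mᵀ ⟨a,ha⟩ i * M i ⟨b,hb⟩ := by
    intro i
    simp [firstCols, Matrix.transpose_apply, ha, hb]
  rw [Finset.sum_congr rfl (fun i _ => hl i), h]
  by_cases hab : a = b
  · subst hab; simp [Matrix.one_apply]
  · have hne : (⟨a,ha⟩ : Fin p) ≠ ⟨b,hb⟩ := by
      intro hcon; exact hab (Fin.ext (by simpa using congrArg Fin.val hcon))
    rw [Matrix.one_apply_ne hne, Matrix.one_apply_ne hab]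

lemma Lk_eq {p k : ℕ} (S Q M : Matrix (Fin p) (Fin p) ℝ) (lam : Fin p → ℝ)
    (hQ : Qᵀ * Q = 1) (hQQt : Q * Qᵀ = 1)
    (hdecomp : S = Q * Matrix.diagonal lam * Qᵀ) :
    Lk S M k = S.trace -
      (Matrix.diagonal lam * (Qᵀ * firstCols M k) *
        ((Qᵀ * firstCols M k)ᵀ * Matrix.diagonal lam * (Qᵀ * firstCols M k))⁻¹ *
        (Qᵀ * firstCols M k)ᵀ * Matrix.diagonal lam).trace := by
  set Λ : Matrix (Fin p) (Fin p) ℝ := Matrix.diagonal lam with hΛ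
  set A : Matrix (Fin p) (Fin k) ℝ := firstCols M k with hA
  set B : Matrix (Fin p) (Fin k) ℝ := Qᵀ * A with hB
  have hQA : Q * B = A := by rw [hB, ← Matrix.mul_assoc, hQQt, Matrix.one_mul]
  have hBt : Bᵀ = Aᵀ * Q := by rw [hB, Matrix.transpose_mul, Matrix.transpose_transpose]
  have hG : Aᵀ * S * A = Bᵀ * Λ * B := by
    rw [hdecomp, hBt, hB]
    simp only [Matrix.mul_assoc]
  have hSA : S * A = Q * (Λ * B) := by
    rw [hdecomp, ← hQA]
    simp only [Matrix.mul_assoc]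
    rw [← Matrix.mul_assoc Qᵀ Q B, hQ, Matrix.one_mul]
  have hAS : Aᵀ * S = Bᵀ * Λ * Qᵀ := by
    rw [hdecomp, hBt]
    simp only [Matrix.mul_assoc]
  have e1 : S * A * (Aᵀ * S * A)⁻¹ * Aᵀ * S
      = (S * A) * ((Aᵀ * S * A)⁻¹ * (Aᵀ * S)) := by
    simp only [Matrix.mul_assoc]
  have hX : S * A * (Aᵀ * S * A)⁻¹ * Aᵀ * S
      = Q * (Λ * B * (Bᵀ * Λ * B)⁻¹ * Bᵀ * Λ) * Qᵀ := by
    rw [e1, hG, hSA, hAS]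
    simp only [Matrix.mul_assoc]
  rw [show Lk S M k = (S - S * A * (Aᵀ * S * A)⁻¹ * Aᵀ * S).trace from rfl,
    Matrix.trace_sub, hX, Matrix.trace_mul_comm, ← Matrix.mul_assoc, hQ, Matrix.one_mul]

lemma tri_lemma {p : ℕ} (N : Matrix (Fin p) (Fin p) ℝ) (hN : Nᵀ * N = 1)
    (htri : ∀ i j : Fin p, (j:ℕ) < (i:ℕ) → N i j = 0) :
    ∃ s : Fin p → ℝ, (∀ j, s j = 1 ∨ s j = -1) ∧ ∀ i j, N i j = if i = j then s j else 0 := by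
  have hcol : ∀ n : ℕ, ∀ j : Fin p, (j:ℕ) = n → ∀ i, i ≠ j → N i j = 0 := by
    intro n
    induction n using Nat.strong_induction_on with
    | _ n ih =>
      intro j hj i hij
      rcases lt_trichotomy (i:ℕ) (j:ℕ) with h | h | h
      · -- i < j : column i is concentrated at i (by induction); use orthogonality
        have hcoli : ∀ l, l ≠ i → N l i = 0 := ih (i:ℕ) (by omega) i rfl
        have horto := congrFun (congrFun hN i) j
        rw [Matrix.mul_apply] at horto
        have hsum : ∑ l, Nᵀ i l * N l j = N i i * N i j := by
          apply Finset.sum_eq_single i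
          · intro l _ hl
            rw [Matrix.transpose_apply, hcoli l hl, zero_mul]
          · intro hcon; exact absurd (Finset.mem_univ i) hcon
        rw [hsum, Matrix.one_apply_ne hij] at horto
        have hdiag := congrFun (congrFun hN i) i
        rw [Matrix.mul_apply] at hdiag
        have hsum2 : ∑ l, Nᵀ i l * N l i = N i i * N i i := by
          apply Finset.sum_eq_single i
          · intro l _ hl
            rw [Matrix.transpose_apply, hcoli l hl, zero_mul]
          · intro hcon; exact absurd (Finset.mem_univ i) hcon
        rw [hsum2, Matrix.one_apply_eq] at hdiag
        have hNii : N i i ≠ 0 := by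
          intro h0; rw [h0, mul_zero] at hdiag; norm_num at hdiag
        exact (mul_eq_zero.1 horto).resolve_left hNii
      · exact absurd (Fin.ext h) hij
      · exact htri i j h
  have hcol' : ∀ (j : Fin p) (i : Fin p), i ≠ j → N i j = 0 := fun j i h => hcol (j:ℕ) j rfl i h
  refine ⟨fun j => N j j, ?_, ?_⟩
  · intro j
    have hdiag := congrFun (congrFun hN j) j
    rw [Matrix.mul_apply] at hdiag
    have hsum2 : ∑ l, Nᵀ j l * N l j = N j j * N j j := by
      apply Finset.sum_eq_single j
      · intro l _ hl
        rw [Matrix.transpose_apply, hcol' j l hl, zero_mul]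
      · intro hcon; exact absurd (Finset.mem_univ j) hcon
    rw [hsum2, Matrix.one_apply_eq] at hdiag
    exact mul_self_eq_one_iff.1 hdiag
  · intro i j
    by_cases h : i = j
    · subst h; simp
    · rw [if_neg h, hcol' j i h]
/-- In the Gaussian linear-encoder setting with `Σ* = QΛQᵀ` positive
definite and all eigenvalues distinct (`λ_1 > … > λ_p`), for any strictly positive weights
`ω_0,…,ω_p`, the weighted sum `Σ_k ω_k L_k(M)` over orthogonal `M` is minimized, uniquely
up to column signs, at `M = Q`; moreover `M = Q` simultaneously minimizes every `L_k`. -/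
theorem stmt13 {p : ℕ} (S Q : Matrix (Fin p) (Fin p) ℝ) (lam : Fin p → ℝ)
    (hS : S.PosDef) (hQ : Qᵀ * Q = 1) (hdecomp : S = Q * Matrix.diagonal lam * Qᵀ)
    (hdistinct : ∀ i j : Fin p, i < j → lam j < lam i)
    (ω : ℕ → ℝ) (hω : ∀ i ∈ range (p + 1), 0 < ω i) :
    (∀ M : Matrix (Fin p) (Fin p) ℝ, Mᵀ * M = 1 →
      ((∑ i ∈ range (p + 1), ω i * Lk S Q i) ≤ ∑ i ∈ range (p + 1), ω i * Lk S M i ∧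
        ((∑ i ∈ range (p + 1), ω i * Lk S M i) = (∑ i ∈ range (p + 1), ω i * Lk S Q i)
          ↔ ∃ s : Fin p → ℝ, (∀ j, s j = 1 ∨ s j = -1) ∧
              (∀ i j, M i j = s j * Q i j)))) ∧
    (∀ i ∈ range (p + 1), ∀ M : Matrix (Fin p) (Fin p) ℝ, Mᵀ * M = 1 →
      Lk S Q i ≤ Lk S M i) := by
  have hQQt : Q * Qᵀ = 1 := mul_eq_one_comm.mp hQ
  have hSsym : Sᵀ = S := by
    rw [hdecomp, Matrix.transpose_mul, Matrix.transpose_mul, Matrix.transpose_transpose,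
      Matrix.diagonal_transpose, Matrix.mul_assoc]
  have hQSQ : Qᵀ * S * Q = Matrix.diagonal lam := by
    rw [hdecomp]
    simp only [Matrix.mul_assoc]
    rw [hQ, Matrix.mul_one, ← Matrix.mul_assoc, hQ, Matrix.one_mul]
  have hpos : ∀ i, 0 < lam i := by
    intro i
    have hx : Q *ᵥ Pi.single i 1 ≠ 0 := by
      intro h
      have h2 : Qᵀ *ᵥ (Q *ᵥ Pi.single i 1) = Pi.single i 1 := by
        rw [Matrix.mulVec_mulVec, hQ, Matrix.one_mulVec]
      rw [h, Matrix.mulVec_zero] at h2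
      have := congrFun h2 i
      simp at this
    have hquad := hS.dotProduct_mulVec_pos hx
    have hstar : star (Q *ᵥ Pi.single i 1) = Q *ᵥ Pi.single i 1 := by
      ext a; simp
    rw [hstar] at hquad
    have hcalc : (Q *ᵥ Pi.single i 1) ⬝ᵥ (S *ᵥ (Q *ᵥ Pi.single i 1)) = lam i := by
      have hx' : Q *ᵥ Pi.single i 1 = fun a => Q a i := by
        ext a; rw [Matrix.mulVec_single]; simp
      rw [hx']
      have hQSQi := congrFun (congrFun hQSQ i) i
      rw [Matrix.diagonal_apply_eq] at hQSQi
      rw [← hQSQi, Matrix.mul_apply]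
      rw [dotProduct]
      apply Finset.sum_congr rfl
      intro a _
      rw [Matrix.mul_apply, Matrix.mulVec, dotProduct, Finset.sum_mul, Finset.mul_sum]
      apply Finset.sum_congr rfl
      intro b _
      rw [Matrix.transpose_apply]
      have hsab : S b a = S a b := by
        have h := congrFun (congrFun hSsym a) b
        rwa [Matrix.transpose_apply] at h
      rw [hsab]; ring
    rw [hcalc] at hquad
    exact hquad
  have hBorth : ∀ (M : Matrix (Fin p) (Fin p) ℝ) (k : ℕ), k ≤ p → Mᵀ * M = 1 →
      (Qᵀ * firstCols M k)ᵀ * (Qᵀ * firstCols M k) = 1 := by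
    intro M k hk hM
    rw [Matrix.transpose_mul, Matrix.transpose_transpose, Matrix.mul_assoc,
      ← Matrix.mul_assoc Q Qᵀ (firstCols M k), hQQt, Matrix.one_mul,
      firstCols_orth hk M hM]
  have hLkQ : ∀ k : ℕ, k ≤ p →
      Lk S Q k = S.trace - ∑ j : Fin p, (if (j:ℕ) < k then lam j else 0) := by
    intro k hk
    rw [Lk_eq S Q Q lam hQ hQQt hdecomp]
    congr 1
    apply ((keyC hk lam hpos hdistinct _ (hBorth Q k hk hQ)).2).mpr
    intro i j hi
    rw [firstCols_mul hk Qᵀ Q, hQ]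
    have hj : (j:ℕ) < p := lt_of_lt_of_le j.isLt hk
    show (if h : (j:ℕ) < p then (1 : Matrix (Fin p) (Fin p) ℝ) i ⟨j, h⟩ else 0) = 0
    rw [dif_pos hj, Matrix.one_apply_ne]
    intro hcon
    have := congrArg Fin.val hcon
    simp at this
    omega
  have hle : ∀ k : ℕ, k ≤ p → ∀ M : Matrix (Fin p) (Fin p) ℝ, Mᵀ * M = 1 →
      Lk S Q k ≤ Lk S M k := by
    intro k hk M hM
    rw [hLkQ k hk, Lk_eq S Q M lam hQ hQQt hdecomp]
    have := (keyC hk lam hpos hdistinct _ (hBorth M k hk hM)).1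
    linarith
  have heqrows : ∀ k : ℕ, (hk : k ≤ p) → ∀ M : Matrix (Fin p) (Fin p) ℝ, (hM : Mᵀ * M = 1) →
      Lk S M k = Lk S Q k →
      ∀ (i : Fin p) (j : Fin k), k ≤ (i:ℕ) → (Qᵀ * firstCols M k) i j = 0 := by
    intro k hk M hM heq
    apply ((keyC hk lam hpos hdistinct _ (hBorth M k hk hM)).2).mp
    rw [hLkQ k hk, Lk_eq S Q M lam hQ hQQt hdecomp] at heq
    linarith
  constructor
  · intro M hM
    constructor
    · apply Finset.sum_le_sum
      intro i hi
      have hk : i ≤ p := by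
        have := Finset.mem_range.1 hi; omega
      exact mul_le_mul_of_nonneg_left (hle i hk M hM) (hω i hi).le
    constructor
    · intro heq
      have hzero : ∑ i ∈ range (p+1), ω i * (Lk S M i - Lk S Q i) = 0 := by
        have : ∀ i ∈ range (p+1), ω i * (Lk S M i - Lk S Q i)
            = ω i * Lk S M i - ω i * Lk S Q i := fun i _ => by ring
        rw [Finset.sum_congr rfl this, Finset.sum_sub_distrib, heq, sub_self]
      have hterm := (Finset.sum_eq_zero_iff_of_nonneg (fun i hi => by
        have hk : i ≤ p := by have := Finset.mem_range.1 hi; omega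
        exact mul_nonneg (hω i hi).le (sub_nonneg.2 (hle i hk M hM)))).1 hzero
      have hLkeq : ∀ k : ℕ, k ≤ p → Lk S M k = Lk S Q k := by
        intro k hk
        have h := hterm k (Finset.mem_range.2 (by omega))
        rcases mul_eq_zero.1 h with h' | h'
        · exact absurd h' (ne_of_gt (hω k (Finset.mem_range.2 (by omega))))
        · linarith
      have hNorth : (Qᵀ * M)ᵀ * (Qᵀ * M) = 1 := by
        rw [Matrix.transpose_mul, Matrix.transpose_transpose, Matrix.mul_assoc,
          ← Matrix.mul_assoc Q Qᵀ M, hQQt, Matrix.one_mul, hM]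
      have htri : ∀ i j : Fin p, (j:ℕ) < (i:ℕ) → (Qᵀ * M) i j = 0 := by
        intro i j hij
        have hk : (j:ℕ)+1 ≤ p := j.isLt
        have hrows := heqrows ((j:ℕ)+1) hk M hM (hLkeq _ hk)
        have h := hrows i ⟨(j:ℕ), by omega⟩ (by omega)
        rw [firstCols_mul hk Qᵀ M] at h
        have hj : (j:ℕ) < p := j.isLt
        rw [show firstCols (Qᵀ * M) ((j:ℕ)+1) i ⟨(j:ℕ), by omega⟩
            = (Qᵀ * M) i ⟨(j:ℕ), hj⟩ from by simp [firstCols, hj]] at h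
        have : (⟨(j:ℕ), hj⟩ : Fin p) = j := by ext; rfl
        rwa [this] at h
      obtain ⟨s, hs, hNs⟩ := tri_lemma (Qᵀ * M) hNorth htri
      refine ⟨s, hs, ?_⟩
      intro i j
      have hM' : M = Q * (Qᵀ * M) := by
        rw [← Matrix.mul_assoc, hQQt, Matrix.one_mul]
      conv_lhs => rw [hM']
      rw [Matrix.mul_apply]
      rw [Finset.sum_eq_single j (fun l _ hl => by rw [hNs l j, if_neg hl, mul_zero])
        (fun hcon => absurd (Finset.mem_univ j) hcon)]
      rw [hNs j j, if_pos rfl]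
      ring
    · rintro ⟨s, hs, hMs⟩
      apply Finset.sum_congr rfl
      intro k hk'
      have hk : k ≤ p := by have := Finset.mem_range.1 hk'; omega
      congr 1
      rw [hLkQ k hk, Lk_eq S Q M lam hQ hQQt hdecomp]
      congr 1
      apply ((keyC hk lam hpos hdistinct _ (hBorth M k hk hM)).2).mpr
      intro i j hi
      rw [firstCols_mul hk Qᵀ M]
      have hj : (j:ℕ) < p := lt_of_lt_of_le j.isLt hk
      show (if h : (j:ℕ) < p then (Qᵀ * M) i ⟨j, h⟩ else 0) = 0
      rw [dif_pos hj]
      have hQM : (Qᵀ * M) i ⟨(j:ℕ), hj⟩ = s ⟨(j:ℕ), hj⟩ * (Qᵀ * Q) i ⟨(j:ℕ), hj⟩ := by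
        rw [Matrix.mul_apply, Matrix.mul_apply, Finset.mul_sum]
        apply Finset.sum_congr rfl
        intro l _
        rw [hMs l ⟨(j:ℕ), hj⟩]
        ring
      rw [hQM, hQ, Matrix.one_apply_ne, mul_zero]
      intro hcon
      have := congrArg Fin.val hcon
      simp at this
      omega
  · intro i hi M hM
    exact hle i (by have := Finset.mem_range.1 hi; omega) M hM
end
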